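/- arXiv:2308.06232 — 4 statements merged into one kernel-verified Lean document; each statement's English description precedes it below -/
import Mathlib

section
/- Let G = (V,E) be a locally finite connected simple graph and let ν : V → [0,∞) be a weight with finite total mass ν(V) = Σ_{v∈V} ν(v) < ∞ (write ν(B) = Σ_{v∈B} ν(v)). Let A ⊆ V be a connected subset with #A ≥ 2 and finite diameter. Then there exists z ∈ A such that ν(B(z,r)) ≤ (8/diam A)·max(r,1)·ν(V) for every r > 0. -/
open scoped ENNReal NNReal

namespace Paper

variable {V : Type*}

/-- A combinatorial path in a simple graph `G`: a list of at least two vertices in which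
consecutive vertices are adjacent.  Paths are identified with their vertex sets. -/
def IsPathList (G : SimpleGraph V) (θ : List V) : Prop :=
  θ.Chain' G.Adj ∧ 2 ≤ θ.length

/-- The `ρ`-length of a path `θ` (identified with its vertex set): the sum of `ρ`
over the distinct vertices of `θ`. -/
noncomputable def pathLen [DecidableEq V] (ρ : V → ℝ≥0) (θ : List V) : ℝ≥0∞ :=
  ∑ v ∈ θ.toFinset, (ρ v : ℝ≥0∞)

/-- `ρ` is admissible for the path family `Θ`. -/
def AdmissibleFor [DecidableEq V] (Θ : Set (List V)) (ρ : V → ℝ≥0) : Prop :=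
  ∀ θ ∈ Θ, 1 ≤ pathLen ρ θ

/-- The combinatorial `p`-modulus of a path family. -/
noncomputable def pMod [DecidableEq V] (p : ℝ) (Θ : Set (List V)) : ℝ≥0∞ :=
  ⨅ (ρ : V → ℝ≥0) (_ : AdmissibleFor Θ ρ), ∑' v : V, (ρ v : ℝ≥0∞) ^ p

/-- Open ball in the graph metric. -/
def gBall (G : SimpleGraph V) (x : V) (r : ℝ) : Set V :=
  {y | (G.dist x y : ℝ) < r}

/-- Closed ball in the graph metric. -/
def gcBall (G : SimpleGraph V) (x : V) (r : ℝ) : Set V :=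
  {y | (G.dist x y : ℝ) ≤ r}

/-- Diameter (in `ℝ≥0∞`) of a set of vertices, with respect to the graph metric. -/
noncomputable def gDiam (G : SimpleGraph V) (A : Set V) : ℝ≥0∞ :=
  ⨆ x ∈ A, ⨆ y ∈ A, (G.dist x y : ℝ≥0∞)

/-- Distance (in `ℝ≥0∞`) between two sets of vertices. -/
noncomputable def gDist (G : SimpleGraph V) (A B : Set V) : ℝ≥0∞ :=
  ⨅ x ∈ A, ⨅ y ∈ B, (G.dist x y : ℝ≥0∞)

/-- `PathIn G A₀ A₁ A₂ θ` : `θ` is a path lying in `A₂`, starting in `A₀` and ending in `A₁`. -/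
def PathIn (G : SimpleGraph V) (A₀ A₁ A₂ : Set V) (θ : List V) : Prop :=
  IsPathList G θ ∧ (∀ v ∈ θ, v ∈ A₂) ∧
    ∀ h : θ ≠ [], θ.head h ∈ A₀ ∧ θ.getLast h ∈ A₁

/-- A subset of the vertex set is connected if the induced subgraph is connected. -/
def ConnSubset (G : SimpleGraph V) (A : Set V) : Prop :=
  (G.induce A).Connected

/-- Local finiteness of a graph. -/
def LocFin (G : SimpleGraph V) : Prop := ∀ v : V, (G.neighborSet v).Finite

/-- `deg(G) ≤ D` : a uniform bound on vertex degrees. -/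
def DegLE (G : SimpleGraph V) (D : ℕ) : Prop :=
  ∀ v : V, (G.neighborSet v).Finite ∧ (G.neighborSet v).ncard ≤ D

/-- The combinatorial ball Loewner condition `BCL_p(ζ)` with explicit constants
`A`, `cB(⬝)`, `LB(⬝)`. -/
def BCLwith [DecidableEq V] (G : SimpleGraph V) (p ζ A : ℝ) (cB LB : ℝ → ℝ) : Prop :=
  1 ≤ A ∧ (∀ κ : ℝ, 0 < κ → 0 < cB κ ∧ 0 < LB κ) ∧
    ∀ κ : ℝ, 0 < κ → ∀ R : ℝ, 1 ≤ R →
      ENNReal.ofReal (A * R) < gDiam G Set.univ →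
      ∀ x₁ x₂ : V,
        gDist G (gBall G x₁ R) (gBall G x₂ R) ≤ ENNReal.ofReal (κ * R) →
        ENNReal.ofReal (cB κ * R ^ ζ) ≤
          pMod p {θ | PathIn G (gBall G x₁ R) (gBall G x₂ R) Set.univ θ ∧
            gDiam G {v | v ∈ θ} ≤ ENNReal.ofReal (LB κ * R)}

/-- Discrete `p`-energy (`ℝ≥0∞`-valued) of `f` over the edges with both endpoints in `A`. -/
noncomputable def pEnergy (G : SimpleGraph V) (p : ℝ) (A : Set V) (f : V → ℝ) : ℝ≥0∞ :=
  (∑' e : {e : V × V // G.Adj e.1 e.2 ∧ e.1 ∈ A ∧ e.2 ∈ A},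
      ENNReal.ofReal (|f e.1.1 - f e.1.2| ^ p)) / 2

/-- Average of `f` over the ball `B(x,R)` (with respect to the counting measure). -/
noncomputable def ballAvg (G : SimpleGraph V) (x : V) (R : ℝ) (f : V → ℝ) : ℝ :=
  (∑ᶠ y ∈ gBall G x R, f y) / ((gBall G x R).ncard : ℝ)

/-- The `(p,p)`-Poincaré inequality `PI_p(β)` with constants `CPI`, `API`. -/
def PIineq (G : SimpleGraph V) (p β CPI API : ℝ) : Prop :=
  ∀ (x : V) (R : ℝ), 1 ≤ R → ∀ f : V → ℝ,
    (∑' y : gBall G x R, ENNReal.ofReal (|f y - ballAvg G x R f| ^ p)) ≤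
      ENNReal.ofReal (CPI * R ^ β) * pEnergy G p (gBall G x (API * R)) f

/-- Truncated maximal function of the gradient: `M_R^p[f](x)`. -/
noncomputable def maxEnergy (G : SimpleGraph V) (p : ℝ) (f : V → ℝ) (R : ℝ) (x : V) : ℝ≥0∞ :=
  ⨆ (r : ℝ) (_ : 0 < r) (_ : r < R),
    pEnergy G p (gBall G x r) f / ((gBall G x r).ncard : ℝ≥0∞)

/-- The two-point estimate `TP_p(β)` with constant `CTP`. -/
def TPineq (G : SimpleGraph V) (p β CTP : ℝ) : Prop :=
  ∀ (z : V) (R : ℝ), 1 ≤ R → ∀ f : V → ℝ,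
    ∀ x ∈ gBall G z (CTP⁻¹ * R), ∀ y ∈ gBall G z (CTP⁻¹ * R),
      ENNReal.ofReal (|f x - f y| ^ p) ≤
        ENNReal.ofReal (CTP * R ^ β) * (maxEnergy G p f R x + maxEnergy G p f R y)

/-- The volume growth condition `VD(α)` with constant `CD`. -/
def VDgrowth (G : SimpleGraph V) (α CD : ℝ) : Prop :=
  ∀ (x y : V) (r R : ℝ), 1 ≤ r → r ≤ R →
    (gBall G x R).Finite ∧
      ((gBall G x R).ncard : ℝ) ≤
        CD * (((G.dist x y : ℝ) + R) / r) ^ α * ((gBall G y r).ncard : ℝ)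

/-- `d_f`-Ahlfors regularity of the graph `AR(d_f)` with constant `CAR`. -/
def ARreg (G : SimpleGraph V) (df CAR : ℝ) : Prop :=
  ∀ (x : V) (R : ℝ), 1 ≤ R → ENNReal.ofReal R ≤ gDiam G Set.univ →
    (gBall G x R).Finite ∧
      CAR⁻¹ * R ^ df ≤ ((gBall G x R).ncard : ℝ) ∧
      ((gBall G x R).ncard : ℝ) ≤ CAR * R ^ df

/-- Discrete `p`-capacity `cap_p(A₀, A₁; A₂)`. -/
noncomputable def pCap (G : SimpleGraph V) (p : ℝ) (A₀ A₁ A₂ : Set V) : ℝ≥0∞ :=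
  ⨅ (f : V → ℝ) (_ : ∀ x ∈ A₀, f x = 0) (_ : ∀ x ∈ A₁, f x = 1), pEnergy G p A₂ f

/-- The capacity upper bound `cap_{p,≤}(β)` with constants `Ccap`, `Acap`. -/
def CapUB (G : SimpleGraph V) (p β Ccap Acap : ℝ) : Prop :=
  ∀ (x : V) (R : ℝ), 1 ≤ R →
    ENNReal.ofReal (Acap * R) < gDiam G Set.univ →
    pCap G p (gBall G x R) ((gBall G x (2 * R))ᶜ) Set.univ ≤
      ENNReal.ofReal (Ccap * ((gBall G x R).ncard : ℝ) / R ^ β)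

/-- The discrete `p`-Laplacian. -/
noncomputable def pLap (G : SimpleGraph V) (p : ℝ) (f : V → ℝ) (x : V) : ℝ :=
  (∑ᶠ y ∈ G.neighborSet x, Real.sign (f y - f x) * |f y - f x| ^ (p - 1)) /
    ((G.neighborSet x).ncard : ℝ)

/-- The graph closure `Ā = A ∪ ∂A` of a vertex set. -/
def vClosure (G : SimpleGraph V) (A : Set V) : Set V :=
  A ∪ {x | ∃ y ∈ A, G.Adj x y}

/-- Real-valued sum of a symmetric function over the unordered edges within `A`. -/
noncomputable def edgeSum (G : SimpleGraph V) (A : Set V) (F : V → V → ℝ) : ℝ :=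
  (∑' e : {e : V × V // G.Adj e.1 e.2 ∧ e.1 ∈ A ∧ e.2 ∈ A}, F e.1.1 e.1.2) / 2

/-- The signed `p`-energy pairing `𝔈_p^G(f; g)`. -/
noncomputable def pEnergySigned (G : SimpleGraph V) (p : ℝ) (f g : V → ℝ) : ℝ :=
  edgeSum G Set.univ (fun x y => Real.sign (f y - f x) * |f y - f x| ^ (p - 1) * (g y - g x))

/-- Real-valued discrete `p`-energy `𝔈_p^G(f)`. -/
noncomputable def pEnergyReal (G : SimpleGraph V) (p : ℝ) (f : V → ℝ) : ℝ :=
  edgeSum G Set.univ (fun x y => |f x - f y| ^ p)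

end Paper

/-! Let `x, y ∈ A` realise the diameter `N`, and pick along a path in `A` points
`w₀, …, w_N ∈ A` with `d(x, w_j) = j`. If every `w_j` had an (integer) radius `m_j` with
`ν(B(w_j, m_j)) > (4/N) m_j ν(V)`, the intervals `(j - m_j, j + m_j)` would cover `{0, …, N}`.
A greedy choice yields a subcover (so `2 ∑ m_j ≥ N + 1`) that splits into two families of
pairwise disjoint intervals, one of which has `∑ m_j ≥ (N + 1)/4`. Since
`d(w_i, w_j) ≥ |i - j|`, disjoint intervals give disjoint balls, and summing `ν` over them
yields `ν(V) > ν(V)`. Replacing a real radius `r` by `⌈r⌉` costs the remaining factor `2`. -/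

namespace Paper

/-- The integer intervals `(i - m i, i + m i)`, `i ∈ S`, are pairwise disjoint. -/
def IntervalSeparated (m : ℕ → ℕ) (S : Finset ℕ) : Prop :=
  ∀ i ∈ S, ∀ j ∈ S, i < j → i + m i + m j ≤ j + 1

/- Greedy covering of `[p, n)`: take the interval through `p` that reaches furthest to the right,
continue from its right end, and put the chosen intervals alternately into `S` and `T`. By
maximality, an interval chosen two steps later starts beyond the current right end. -/
theorem exists_intervalSeparated_pair (n : ℕ) (m : ℕ → ℕ) (hm : ∀ j < n, 0 < m j) (p : ℕ) :
    ∃ S T : Finset ℕ, IntervalSeparated m S ∧ IntervalSeparated m T ∧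
      (∀ j ∈ S ∪ T, j < n ∧ p < j + m j) ∧ (∀ j ∈ T, p + m j ≤ j) ∧
      n ≤ p + 2 * (∑ j ∈ S, m j + ∑ j ∈ T, m j) := by
  by_cases hp : n ≤ p
  · exact ⟨∅, ∅, by simp [IntervalSeparated], by simp [IntervalSeparated], by simp, by simp,
      by omega⟩
  set C := (Finset.range n).filter fun j => j < p + m j ∧ p < j + m j
  have hpC : p ∈ C := by
    have := hm p (by omega)
    simp only [C, Finset.mem_filter, Finset.mem_range]
    omega
  obtain ⟨c, hcC, hcmax⟩ := C.exists_max_image (fun j => j + m j) ⟨p, hpC⟩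
  have hc : c < n ∧ c < p + m c ∧ p < c + m c := by simpa [C] using hcC
  have hnotC : ∀ j < n, c + m c < j + m j → ¬ (j < p + m j ∧ p < j + m j) := fun j hj hlt hjC =>
    absurd (hcmax j (by simp [C, hj, hjC])) (by omega)
  obtain ⟨S, T, hS, hT, hST, hTleft, hcover⟩ := exists_intervalSeparated_pair n m hm (c + m c)
  have hcT : c ∉ T := fun h => by have := hTleft c h; omega
  refine ⟨insert c T, S, ?_, hS, ?_, ?_, ?_⟩
  · intro i hi j hj hij
    simp only [Finset.mem_insert] at hi hj
    rcases hi with rfl | hi <;> rcases hj with rfl | hj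
    · omega
    · have := hTleft j hj; omega
    · have := hTleft i hi; omega
    · exact hT i hi j hj hij
  · intro j hj
    simp only [Finset.mem_union, Finset.mem_insert] at hj
    rcases hj with (rfl | hj) | hj
    · omega
    · have := hST j (Finset.mem_union_right S hj); omega
    · have := hST j (Finset.mem_union_left T hj); omega
  · intro j hj
    have := hST j (Finset.mem_union_left T hj)
    have := hnotC j this.1 (by omega)
    omega
  · rw [Finset.sum_insert hcT]
    omega
termination_by n - p
decreasing_by omega

theorem exists_intervalSeparated_le_four_mul_sum (n : ℕ) (m : ℕ → ℕ) (hm : ∀ j < n, 0 < m j) :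
    ∃ S ⊆ Finset.range n, IntervalSeparated m S ∧ n ≤ 4 * ∑ j ∈ S, m j := by
  obtain ⟨S, T, hS, hT, hST, -, hcover⟩ := exists_intervalSeparated_pair n m hm 0
  have hsub : ∀ U ⊆ S ∪ T, U ⊆ Finset.range n := fun U hU j hj =>
    Finset.mem_range.mpr (hST j (hU hj)).1
  by_cases h : ∑ j ∈ T, m j ≤ ∑ j ∈ S, m j
  · exact ⟨S, hsub S Finset.subset_union_left, hS, by omega⟩
  · exact ⟨T, hsub T Finset.subset_union_right, hT, by omega⟩

variable {V : Type*} {G : SimpleGraph V}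

theorem exists_mem_support_dist_eq {u x : V} (p : G.Walk u x) {j : ℕ} (hj : j ≤ G.dist x u) :
    ∃ w ∈ p.support, G.dist x w = j := by
  induction p with
  | nil => exact ⟨_, SimpleGraph.Walk.start_mem_support _, by simp_all⟩
  | @cons u u' x hadj q ih =>
    by_cases hj' : j ≤ G.dist x u'
    · obtain ⟨w, hw, hwj⟩ := ih hj'
      exact ⟨w, List.mem_cons_of_mem _ hw, hwj⟩
    · have := hadj.symm.reachable.dist_triangle_right x
      rw [SimpleGraph.dist_eq_one_iff_adj.mpr hadj.symm] at this
      exact ⟨u, SimpleGraph.Walk.start_mem_support _, by omega⟩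

theorem ConnSubset.exists_mem_dist_eq {A : Set V} (hA : ConnSubset G A) {x y : V} (hx : x ∈ A)
    (hy : y ∈ A) {j : ℕ} (hj : j ≤ G.dist x y) : ∃ w ∈ A, G.dist x w = j := by
  obtain ⟨p⟩ := hA.preconnected ⟨y, hy⟩ ⟨x, hx⟩
  obtain ⟨w, hw, hwj⟩ :=
    exists_mem_support_dist_eq (p.map (SimpleGraph.Embedding.induce A).toHom) hj
  rw [SimpleGraph.Walk.support_map, List.mem_map] at hw
  obtain ⟨w', -, rfl⟩ := hw
  exact ⟨w', w'.2, hwj⟩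

theorem dist_le_gDiam {A : Set V} {x y : V} (hx : x ∈ A) (hy : y ∈ A) :
    (G.dist x y : ℝ≥0∞) ≤ gDiam G A :=
  le_iSup₂_of_le x hx (le_iSup₂_of_le y hy le_rfl)

theorem exists_dist_eq_gDiam {A : Set V} (hA : A.Nonempty) (hdiam : gDiam G A ≠ ⊤) :
    ∃ x ∈ A, ∃ y ∈ A, gDiam G A = G.dist x y := by
  set D : Set ℕ := {d | ∃ x ∈ A, ∃ y ∈ A, G.dist x y = d}
  have hD : BddAbove D := by
    refine ⟨⌊(gDiam G A).toReal⌋₊, ?_⟩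
    rintro _ ⟨x, hx, y, hy, rfl⟩
    have := ENNReal.toReal_mono hdiam (dist_le_gDiam (G := G) hx hy)
    exact Nat.le_floor (by simpa using this)
  obtain ⟨x, hx, y, hy, hxy⟩ : sSup D ∈ D :=
    Nat.sSup_mem (hA.elim fun x hx => ⟨_, x, hx, x, hx, rfl⟩) hD
  refine ⟨x, hx, y, hy, le_antisymm (iSup₂_le fun x' hx' => iSup₂_le fun y' hy' => ?_)
    (dist_le_gDiam hx hy)⟩
  rw [hxy]
  exact_mod_cast le_csSup hD ⟨x', hx', y', hy', rfl⟩

theorem gBall_natCeil (x : V) (r : ℝ) : gBall G x ⌈r⌉₊ = gBall G x r := by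
  ext v
  simp [gBall, Nat.lt_ceil]

theorem disjoint_gBall (hconn : G.Connected) {x y : V} {m n : ℕ} (h : m + n ≤ G.dist x y + 1) :
    Disjoint (gBall G x m) (gBall G y n) := by
  refine Set.disjoint_left.mpr fun v hvx hvy => ?_
  simp only [gBall, Set.mem_ofPred_eq, Nat.cast_lt] at hvx hvy
  have := hconn.dist_triangle (u := x) (v := v) (w := y)
  rw [SimpleGraph.dist_comm (u := v)] at this
  omega

theorem sum_tsum_le_tsum_of_pairwiseDisjoint {ι : Type*} (f : V → ℝ≥0∞) {S : Finset ι}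
    {B : ι → Set V} (h : (S : Set ι).PairwiseDisjoint B) :
    ∑ i ∈ S, ∑' v : B i, f v ≤ ∑' v, f v := by
  rw [← Finset.tsum_subtype]
  exact (ENNReal.tsum_biUnion' h).symm.le.trans
    (ENNReal.tsum_comp_le_tsum_of_injective Subtype.val_injective f)

theorem IntervalSeparated.pairwiseDisjoint_gBall (hconn : G.Connected) {m : ℕ → ℕ}
    {S : Finset ℕ} (hS : IntervalSeparated m S) {x : V} {w : ℕ → V}
    (hw : ∀ j ∈ S, G.dist x (w j) = j) :
    (S : Set ℕ).PairwiseDisjoint fun j => gBall G (w j) (m j) := by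
  have key : ∀ i ∈ S, ∀ j ∈ S, i < j → Disjoint (gBall G (w i) (m i)) (gBall G (w j) (m j)) := by
    intro i hi j hj hij
    apply disjoint_gBall hconn
    have := hconn.dist_triangle (u := x) (v := w i) (w := w j)
    have := hS i hi j hj hij
    rw [hw i hi, hw j hj] at *
    omega
  intro i hi j hj hne
  rcases hne.lt_or_gt with h | h
  · exact key i hi j hj h
  · exact (key j hj i hi h).symm

theorem exists_forall_tsum_gBall_le (hconn : G.Connected) (f : V → ℝ≥0∞) (hf : ∑' v, f v ≠ ⊤)
    {N : ℕ} (hN : 0 < N) {x : V} {w : ℕ → V} (hw : ∀ j ≤ N, G.dist x (w j) = j) :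
    ∃ j ≤ N, ∀ m : ℕ, 0 < m →
      ∑' v : gBall G (w j) m, f v ≤ ENNReal.ofReal (4 / N * m) * ∑' v, f v := by
  set T := ∑' v, f v
  by_contra! hbad
  choose! m hm hmT using hbad
  obtain ⟨S, hSN, hS, hSm⟩ :=
    exists_intervalSeparated_le_four_mul_sum (N + 1) m fun j hj => hm j (by omega)
  have hSN' : ∀ j ∈ S, j ≤ N := fun j hj => Nat.lt_succ_iff.mp (Finset.mem_range.mp (hSN hj))
  have hT0 : T ≠ 0 := by
    refine (zero_le.trans_lt ((hmT 0 hN.le).trans_le ?_)).ne'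
    exact ENNReal.tsum_comp_le_tsum_of_injective Subtype.val_injective _
  have hNS : 1 < 4 / (N : ℝ) * ∑ j ∈ S, m j := by
    rw [div_mul_eq_mul_div, one_lt_div (by positivity)]
    exact_mod_cast hSm
  refine lt_irrefl T ?_
  calc T = 1 * T := (one_mul T).symm
    _ < ENNReal.ofReal (4 / N * ∑ j ∈ S, m j) * T := by
      gcongr
      exact ENNReal.one_lt_ofReal.mpr hNS
    _ = ∑ j ∈ S, ENNReal.ofReal (4 / N * m j) * T := by
      rw [Nat.cast_sum, Finset.mul_sum, ENNReal.ofReal_sum_of_nonneg fun j _ => by positivity,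
        Finset.sum_mul]
    _ ≤ ∑ j ∈ S, ∑' v : gBall G (w j) (m j), f v :=
      Finset.sum_le_sum fun j hj => (hmT j (hSN' j hj)).le
    _ ≤ T := sum_tsum_le_tsum_of_pairwiseDisjoint f
      (hS.pairwiseDisjoint_gBall hconn fun j hj => hw j (hSN' j hj))

theorem tsum_gBall_le_of_forall_nat (f : V → ℝ≥0∞) {c : ℝ} (hc : 0 ≤ c) {T : ℝ≥0∞} {z : V}
    (h : ∀ m : ℕ, 0 < m → ∑' v : gBall G z m, f v ≤ ENNReal.ofReal (c * m) * T) {r : ℝ}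
    (hr : 0 < r) : ∑' v : gBall G z r, f v ≤ ENNReal.ofReal (2 * c * max r 1) * T := by
  rw [← gBall_natCeil]
  refine (h _ (Nat.ceil_pos.mpr hr)).trans ?_
  gcongr ENNReal.ofReal ?_ * _
  calc c * ⌈r⌉₊ ≤ c * (r + 1) := by gcongr; exact (Nat.ceil_lt_add_one hr.le).le
    _ ≤ 2 * c * max r 1 := by nlinarith [le_max_left r 1, le_max_right r 1]

end Paper

theorem statement2_general {V : Type*} (G : SimpleGraph V) (hconn : G.Connected)
    (ν : V → ℝ≥0) (hν : (∑' v : V, (ν v : ℝ≥0∞)) ≠ ⊤)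
    (A : Set V) (hA : Paper.ConnSubset G A) (hA2 : A.Nontrivial)
    (hdiam : Paper.gDiam G A ≠ ⊤) :
    ∃ z ∈ A, ∀ r : ℝ, 0 < r →
      (∑' v : Paper.gBall G z r, (ν v : ℝ≥0∞)) ≤
        ENNReal.ofReal (8 / (Paper.gDiam G A).toReal * max r 1) * ∑' v : V, (ν v : ℝ≥0∞) := by
  obtain ⟨x, hx, y, hy, hxy⟩ := Paper.exists_dist_eq_gDiam hA2.nonempty hdiam
  set N := G.dist x y
  have hN : 0 < N := by
    obtain ⟨a, ha, b, hb, hab⟩ := hA2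
    have := Paper.dist_le_gDiam (G := G) ha hb
    rw [hxy, Nat.cast_le] at this
    exact (hconn.pos_dist_of_ne hab).trans_le this
  have : Nonempty V := ⟨x⟩
  choose! w hwA hwd using fun j (hj : j ≤ N) => hA.exists_mem_dist_eq hx hy hj
  obtain ⟨j, hj, hmass⟩ := Paper.exists_forall_tsum_gBall_le hconn _ hν hN hwd
  refine ⟨w j, hwA j hj, fun r hr => ?_⟩
  rw [hxy, ENNReal.toReal_natCast, show 8 / (N : ℝ) = 2 * (4 / N) by ring]
  exact Paper.tsum_gBall_le_of_forall_nat (fun v => (ν v : ℝ≥0∞)) (c := 4 / N) (by positivity)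
    hmass hr

/-- linear decay of measure on a connected set.
Let `G` be a locally finite connected simple graph, `ν : V → [0,∞)` a weight with finite
total mass, and `A ⊆ V` a connected subset with at least two points and finite diameter.
Then some `z ∈ A` satisfies `ν(B(z,r)) ≤ (8/diam A)·max(r,1)·ν(V)` for every `r > 0`. -/
theorem statement2 {V : Type*} (G : SimpleGraph V) (hconn : G.Connected)
    (hlf : Paper.LocFin G)
    (ν : V → ℝ≥0) (hν : (∑' v : V, (ν v : ℝ≥0∞)) ≠ ⊤)
    (A : Set V) (hA : Paper.ConnSubset G A) (hA2 : A.Nontrivial)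
    (hdiam : Paper.gDiam G A ≠ ⊤) :
    ∃ z ∈ A, ∀ r : ℝ, 0 < r →
      (∑' v : Paper.gBall G z r, (ν v : ℝ≥0∞)) ≤
        ENNReal.ofReal (8 / (Paper.gDiam G A).toReal * max r 1) * ∑' v : V, (ν v : ℝ≥0∞) :=
  statement2_general G hconn ν hν A hA hA2 hdiam
end

section
/- Let p ∈ [1,∞) and β > 0. Assume deg(G) < ∞, the counting measure on G is volume doubling (there exists C_D ≥ 1 with #B(x,2r) ≤ C_D·#B(x,r) for all x ∈ V and r > 0), and G satisfies TP_p(β). Then there exist constants C > 0 and A > 0, depending only on p, C_D, deg(G) and C_TP, such that Σ_{z∈B(x,R)} |f(z) − a|^p ≤ C·R^β·𝔈_{p,B(x,AR)}^G(f) for every x ∈ V, R ≥ 1, f : V → ℝ, and every median a of f on B(x,R), i.e., every a ∈ ℝ with min(#{z ∈ B(x,R) : f(z) ≥ a}, #{z ∈ B(x,R) : f(z) ≤ a}) ≥ #B(x,R)/2. In particular, G satisfies PI_p(β). -/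
open scoped ENNReal NNReal

/-!
Let `a` be a median of `f` on `B = B(x,R)`. Each of `(f - a)⁺` and `(f - a)⁻` is a function
`g ≥ 0` vanishing on at least half of `B`; cut it into dyadic layers `τ_k g`, the clamp of `g`
to `[2^k, 2^(k+1)]` shifted down by `2^k`, so that `g^p ≤ 4^p Σ_k 2^(kp) 1_{L_k}` with
`L_k = {g ≥ 2^(k+1)}`. A layer equals `2^k` on `L_k` and `0` on the zero set of `g`, so by
`TP_p(β)` at scale `(C_TP + 1) R`, if one point of `L_k` has small maximal function `M[τ_k g]`
then every point of the zero set has a large one; either way `{M[τ_k g] ≳ 2^(kp) R^(-β)}` has at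
least half as many points as `L_k`. A Vitali covering and volume doubling bound its size by
`R^β 2^(-kp)` times the energy of `τ_k g` on `B(x, A R)`. The increments of the layers cut
`[s, t]` into disjoint pieces, so for `p ≥ 1` the layer energies sum to at most the energy of
`g`; summing over `k` gives the median estimate. Replacing the median by the mean costs a factor
`2^p` (Jensen).
-/

namespace Paper

open MeasureTheory Function

variable {V : Type*} {G : SimpleGraph V}

section FiniteSets

lemma tsum_subtype_eq_sum_toFinset {M : Type*} [AddCommMonoid M] [TopologicalSpace M]
    {B : Set V} (hB : B.Finite) (F : V → M) : ∑' z : B, F z = ∑ z ∈ hB.toFinset, F z := by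
  rw [← Finset.tsum_subtype', hB.coe_toFinset]

lemma ncard_sep_eq_card_filter {B : Set V} (hB : B.Finite) (P : V → Prop) [DecidablePred P] :
    {z ∈ B | P z}.ncard = (hB.toFinset.filter P).card := by
  rw [← Set.ncard_coe_finset]
  congr
  ext
  simp

end FiniteSets

section Balls

lemma mem_gBall_self {x : V} {r : ℝ} (hr : 0 < r) : x ∈ gBall G x r := by
  simpa [gBall] using hr

lemma gBall_mono {x : V} {r s : ℝ} (h : r ≤ s) : gBall G x r ⊆ gBall G x s :=
  fun _ hy => lt_of_lt_of_le hy h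

lemma gBall_eq_empty {x : V} {r : ℝ} (hr : r ≤ 0) : gBall G x r = ∅ :=
  Set.eq_empty_of_forall_notMem fun _ hy => (lt_of_lt_of_le hy hr).not_ge (Nat.cast_nonneg _)

lemma gBall_subset_gBall_add (hc : G.Connected) {x y : V} {R r : ℝ} (hy : y ∈ gBall G x R) :
    gBall G y r ⊆ gBall G x (R + r) := fun v hv => by
  have : (G.dist x v : ℝ) ≤ G.dist x y + G.dist y v := by exact_mod_cast hc.dist_triangle
  exact lt_of_le_of_lt this (add_lt_add hy hv)

end Balls

def IsDoubling (G : SimpleGraph V) (CD : ℝ) : Prop :=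
  ∀ (x : V) (r : ℝ), 0 < r → (gBall G x (2 * r)).Finite ∧
    ((gBall G x (2 * r)).ncard : ℝ) ≤ CD * ((gBall G x r).ncard : ℝ)

namespace IsDoubling

variable {CD : ℝ}

lemma finite_gBall (hD : IsDoubling G CD) (x : V) (r : ℝ) : (gBall G x r).Finite := by
  rcases le_or_gt r 0 with hr | hr
  · simp [gBall_eq_empty hr]
  · simpa [mul_div_cancel₀] using (hD x (r / 2) (by positivity)).1

lemma ncard_gBall_le (hD : IsDoubling G CD) {x : V} {r s : ℝ} (hr : 0 < r) (hs : s ≤ 2 * r) :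
    ((gBall G x s).ncard : ℝ) ≤ CD * (gBall G x r).ncard :=
  le_trans (by exact_mod_cast Set.ncard_le_ncard (gBall_mono hs) (hD.finite_gBall x _))
    (hD x r hr).2

lemma ncard_gBall_three_mul_le (hD : IsDoubling G CD) {x : V} {r : ℝ} (hr : 0 < r) :
    ((gBall G x (3 * r)).ncard : ℝ) ≤ CD ^ 2 * (gBall G x r).ncard := by
  have h3 : ((gBall G x (3 * r)).ncard : ℝ) ≤ CD * (gBall G x (2 * r)).ncard :=
    hD.ncard_gBall_le (by positivity) (by linarith)
  have h2 := (hD x r hr).2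
  have hpos : (0 : ℝ) < (gBall G x (2 * r)).ncard := by
    exact_mod_cast (Set.ncard_pos (hD.finite_gBall x _)).2 ⟨x, mem_gBall_self (by positivity)⟩
  have hCD : 0 ≤ CD := by
    by_contra! h
    nlinarith [(Nat.cast_nonneg (gBall G x r).ncard : (0 : ℝ) ≤ _)]
  nlinarith

end IsDoubling

section Energy

def edgesIn (G : SimpleGraph V) (A : Set V) : Set (V × V) :=
  {e | G.Adj e.1 e.2 ∧ e.1 ∈ A ∧ e.2 ∈ A}

lemma pEnergy_eq_tsum_edgesIn (p : ℝ) (A : Set V) (f : V → ℝ) :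
    pEnergy G p A f = (∑' e : edgesIn G A, ENNReal.ofReal (|f e.1.1 - f e.1.2| ^ p)) / 2 :=
  rfl

lemma pEnergy_le_pEnergy_of_abs_sub_le {p : ℝ} (hp : 0 ≤ p) (A : Set V) {f g : V → ℝ}
    (h : ∀ u v, |g u - g v| ≤ |f u - f v|) : pEnergy G p A g ≤ pEnergy G p A f :=
  ENNReal.div_le_div_right (ENNReal.tsum_le_tsum fun _ => ENNReal.ofReal_le_ofReal <|
    Real.rpow_le_rpow (abs_nonneg _) (h _ _) hp) 2

lemma sum_pEnergy_le_of_pairwiseDisjoint {ι : Type*} (p : ℝ) (f : V → ℝ) {T : Finset ι}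
    {A : ι → Set V} {A' : Set V} (hdisj : (T : Set ι).PairwiseDisjoint A)
    (hsub : ∀ i ∈ T, A i ⊆ A') :
    ∑ i ∈ T, pEnergy G p (A i) f ≤ pEnergy G p A' f := by
  simp only [pEnergy_eq_tsum_edgesIn, div_eq_mul_inv, ← Finset.sum_mul]
  refine mul_le_mul_left ?_ _
  have hdisjE : (T : Set ι).PairwiseDisjoint fun i => edgesIn G (A i) :=
    fun i hi j hj hij => Set.disjoint_left.2 fun e hei hej =>
      Set.disjoint_left.1 (hdisj hi hj hij) hei.2.1 hej.2.1
  rw [← Finset.tsum_subtype',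
    ← ENNReal.tsum_biUnion' (f := fun e : V × V => ENNReal.ofReal (|f e.1 - f e.2| ^ p)) hdisjE]
  refine ENNReal.tsum_mono_subtype (fun e : V × V => ENNReal.ofReal (|f e.1 - f e.2| ^ p))
    (Set.iUnion₂_subset fun i hi e he => ?_)
  exact ⟨he.1, hsub i hi he.2.1, hsub i hi he.2.2⟩

end Energy

section DyadicTruncation

noncomputable def dyadicTrunc (k : ℤ) (t : ℝ) : ℝ :=
  min (max t (2 ^ k)) (2 ^ (k + 1)) - 2 ^ k

lemma dyadicTrunc_of_le {k : ℤ} {t : ℝ} (h : t ≤ 2 ^ k) : dyadicTrunc k t = 0 := by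
  have : (2 : ℝ) ^ k ≤ 2 ^ (k + 1) := zpow_le_zpow_right₀ one_le_two (by omega)
  simp [dyadicTrunc, max_eq_right h, this]

lemma dyadicTrunc_of_ge {k : ℤ} {t : ℝ} (h : 2 ^ (k + 1) ≤ t) : dyadicTrunc k t = 2 ^ k := by
  have hk : (2 : ℝ) ^ (k + 1) = 2 * 2 ^ k := by rw [zpow_add_one₀ two_ne_zero, mul_comm]
  have : (2 : ℝ) ^ k ≤ t := by linarith [zpow_pos (two_pos : (0 : ℝ) < 2) k]
  rw [dyadicTrunc, max_eq_left this, min_eq_right h, hk]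
  ring

lemma dyadicTrunc_mono (k : ℤ) : Monotone (dyadicTrunc k) := fun _ _ h =>
  sub_le_sub_right (min_le_min_right _ (max_le_max_right _ h)) _

lemma ofReal_dyadicTrunc_sub_le_volume (k : ℤ) (s t : ℝ) :
    ENNReal.ofReal (dyadicTrunc k t - dyadicTrunc k s) ≤
      volume (Set.Ioc s t ∩ Set.Ioc (2 ^ k) (2 ^ (k + 1))) := by
  have : (2 : ℝ) ^ k ≤ 2 ^ (k + 1) := zpow_le_zpow_right₀ one_le_two (by omega)
  rw [Set.Ioc_inter_Ioc, Real.volume_Ioc, ENNReal.ofReal_le_ofReal_iff', dyadicTrunc, dyadicTrunc]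
  simp only [min_def, max_def]
  split_ifs <;> first | (left; linarith) | (right; linarith)

lemma tsum_ofReal_dyadicTrunc_sub_le (s t : ℝ) :
    ∑' k : ℤ, ENNReal.ofReal (dyadicTrunc k t - dyadicTrunc k s) ≤ ENNReal.ofReal (t - s) := by
  have hdisj : Pairwise (Disjoint on fun k : ℤ => Set.Ioc s t ∩ Set.Ioc (2 ^ k) (2 ^ (k + 1))) :=
    (pairwise_disjoint_on _).2 fun k l hkl => Disjoint.mono Set.inter_subset_right
      Set.inter_subset_right <| Set.Ioc_disjoint_Ioc_of_le <| zpow_le_zpow_right₀ one_le_two hkl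
  calc ∑' k : ℤ, ENNReal.ofReal (dyadicTrunc k t - dyadicTrunc k s)
      ≤ ∑' k : ℤ, volume (Set.Ioc s t ∩ Set.Ioc ((2 : ℝ) ^ k) (2 ^ (k + 1))) :=
        ENNReal.tsum_le_tsum fun k => ofReal_dyadicTrunc_sub_le_volume k s t
    _ = volume (⋃ k : ℤ, Set.Ioc s t ∩ Set.Ioc ((2 : ℝ) ^ k) (2 ^ (k + 1))) :=
        (measure_iUnion hdisj fun _ => measurableSet_Ioc.inter measurableSet_Ioc).symm
    _ ≤ volume (Set.Ioc s t) := measure_mono (Set.iUnion_subset fun _ => Set.inter_subset_left)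
    _ = ENNReal.ofReal (t - s) := Real.volume_Ioc

lemma tsum_rpow_le_rpow_tsum {ι : Type*} {p : ℝ} (hp : 1 ≤ p) (f : ι → ℝ≥0∞) :
    ∑' i, f i ^ p ≤ (∑' i, f i) ^ p := by
  have hfin : ∀ s : Finset ι, ∑ i ∈ s, f i ^ p ≤ (∑ i ∈ s, f i) ^ p := by
    classical
    intro s
    induction s using Finset.induction_on with
    | empty => simp
    | insert a s ha ih =>
      rw [Finset.sum_insert ha, Finset.sum_insert ha]
      exact (add_le_add le_rfl ih).trans (ENNReal.add_rpow_le_rpow_add _ _ hp)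
  rw [ENNReal.tsum_eq_iSup_sum]
  exact iSup_le fun s => (hfin s).trans <|
    ENNReal.rpow_le_rpow (ENNReal.sum_le_tsum s) (by linarith)

lemma tsum_ofReal_abs_dyadicTrunc_sub_rpow_le {p : ℝ} (hp : 1 ≤ p) (s t : ℝ) :
    ∑' k : ℤ, ENNReal.ofReal (|dyadicTrunc k t - dyadicTrunc k s| ^ p) ≤
      ENNReal.ofReal (|t - s| ^ p) := by
  wlog hst : s ≤ t generalizing s t
  · simpa only [abs_sub_comm] using this t s (le_of_not_ge hst)
  have hd : ∀ k, 0 ≤ dyadicTrunc k t - dyadicTrunc k s := fun k =>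
    sub_nonneg.2 (dyadicTrunc_mono k hst)
  have hp0 : 0 ≤ p := by linarith
  simp only [abs_of_nonneg (hd _), abs_of_nonneg (sub_nonneg.2 hst),
    ← ENNReal.ofReal_rpow_of_nonneg (hd _) hp0,
    ← ENNReal.ofReal_rpow_of_nonneg (sub_nonneg.2 hst) hp0]
  exact (tsum_rpow_le_rpow_tsum hp _).trans <|
    ENNReal.rpow_le_rpow (tsum_ofReal_dyadicTrunc_sub_le s t) hp0

lemma tsum_pEnergy_dyadicTrunc_le {p : ℝ} (hp : 1 ≤ p) (A : Set V) (g : V → ℝ) :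
    ∑' k : ℤ, pEnergy G p A (fun z => dyadicTrunc k (g z)) ≤ pEnergy G p A g := by
  simp only [pEnergy_eq_tsum_edgesIn, div_eq_mul_inv, ENNReal.tsum_mul_right]
  rw [ENNReal.tsum_comm]
  gcongr ?_ * _
  exact ENNReal.tsum_le_tsum fun e =>
    tsum_ofReal_abs_dyadicTrunc_sub_rpow_le hp (g e.1.2) (g e.1.1)

end DyadicTruncation

section Covering

lemma exists_pairwiseDisjoint_gBall_subcover (hc : G.Connected) (rad : V → ℝ) (S : Finset V)
    (hrad : ∀ z ∈ S, 0 < rad z) :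
    ∃ T ⊆ S, (T : Set V).PairwiseDisjoint (fun z => gBall G z (rad z)) ∧
      ∀ z ∈ S, ∃ y ∈ T, z ∈ gBall G y (3 * rad y) := by
  classical
  induction S using Finset.strongInduction with
  | H S ih =>
  rcases S.eq_empty_or_nonempty with rfl | hne
  · exact ⟨∅, by simp⟩
  -- keep a ball of maximal radius and recurse on the balls disjoint from it
  obtain ⟨i, hiS, hmax⟩ := S.exists_max_image rad hne
  set S' := S.filter fun j => Disjoint (gBall G j (rad j)) (gBall G i (rad i))
  have hi : i ∈ gBall G i (rad i) := mem_gBall_self (hrad i hiS)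
  have hS'S : S' ⊂ S := Finset.filter_ssubset.2 ⟨i, hiS, fun h => h.ne_of_mem hi hi rfl⟩
  obtain ⟨T', hT'S', hT'disj, hT'cov⟩ :=
    ih S' hS'S fun z hz => hrad z (Finset.mem_filter.1 hz).1
  refine ⟨insert i T', Finset.insert_subset hiS (hT'S'.trans hS'S.subset), ?_, fun z hz => ?_⟩
  · rw [Finset.coe_insert]
    exact hT'disj.insert fun j hj _ => (Finset.mem_filter.1 (hT'S' hj)).2.symm
  by_cases hzS' : z ∈ S'
  · obtain ⟨y, hy, hzy⟩ := hT'cov z hzS'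
    exact ⟨y, Finset.mem_insert_of_mem hy, hzy⟩
  refine ⟨i, Finset.mem_insert_self _ _, ?_⟩
  obtain ⟨w, hwz, hwi⟩ := Set.not_disjoint_iff.1 fun h => hzS' (Finset.mem_filter.2 ⟨hz, h⟩)
  have htri : (G.dist i z : ℝ) ≤ G.dist i w + G.dist z w := by
    rw [SimpleGraph.dist_comm (u := z)]
    exact_mod_cast hc.dist_triangle
  have hwz' : (G.dist z w : ℝ) < rad z := hwz
  have hwi' : (G.dist i w : ℝ) < rad i := hwi
  show (G.dist i z : ℝ) < 3 * rad i
  linarith [hmax z hz, hrad i hiS]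

lemma mul_card_le_pEnergy_of_gBall_cover (hc : G.Connected) {CD : ℝ} (hD : IsDoubling G CD)
    {p : ℝ} {h : V → ℝ} {A : Set V} {c : ℝ≥0∞} (S : Finset V) (rad : V → ℝ)
    (hrad : ∀ z ∈ S, 0 < rad z) (hsub : ∀ z ∈ S, gBall G z (3 * rad z) ⊆ A)
    (hE : ∀ z ∈ S, c * (gBall G z (rad z)).ncard ≤ pEnergy G p (gBall G z (rad z)) h) :
    c * S.card ≤ ENNReal.ofReal (CD ^ 2) * pEnergy G p A h := by
  obtain ⟨T, hTS, hTdisj, hTcov⟩ := exists_pairwiseDisjoint_gBall_subcover hc rad S hrad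
  have hcover : (S : Set V) ⊆ ⋃ y ∈ T, gBall G y (3 * rad y) := fun z hz => by
    obtain ⟨y, hy, hzy⟩ := hTcov z hz
    exact Set.mem_biUnion hy hzy
  have hcard : S.card ≤ ∑ y ∈ T, (gBall G y (3 * rad y)).ncard := by
    rw [← Set.ncard_coe_finset]
    exact (Set.ncard_le_ncard hcover (T.finite_toSet.biUnion fun y _ => hD.finite_gBall y _)).trans
      (T.set_ncard_biUnion_le _)
  have hdouble : ∀ y ∈ T, ((gBall G y (3 * rad y)).ncard : ℝ≥0∞) ≤
      ENNReal.ofReal (CD ^ 2) * (gBall G y (rad y)).ncard := fun y hy => by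
    rw [← ENNReal.ofReal_natCast, ← ENNReal.ofReal_natCast (gBall G y (rad y)).ncard,
      ← ENNReal.ofReal_mul (sq_nonneg CD)]
    exact ENNReal.ofReal_le_ofReal (hD.ncard_gBall_three_mul_le (hrad y (hTS hy)))
  calc c * S.card ≤ c * ∑ y ∈ T, ENNReal.ofReal (CD ^ 2) * (gBall G y (rad y)).ncard := by
        gcongr
        exact (Nat.cast_le.2 hcard).trans (by push_cast; exact Finset.sum_le_sum hdouble)
    _ = ENNReal.ofReal (CD ^ 2) * ∑ y ∈ T, c * (gBall G y (rad y)).ncard := by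
        simp only [Finset.mul_sum]
        exact Finset.sum_congr rfl fun _ _ => mul_left_comm _ _ _
    _ ≤ ENNReal.ofReal (CD ^ 2) * ∑ y ∈ T, pEnergy G p (gBall G y (rad y)) h := by
        gcongr with y hy
        exact hE y (hTS hy)
    _ ≤ ENNReal.ofReal (CD ^ 2) * pEnergy G p A h := by
        gcongr
        exact sum_pEnergy_le_of_pairwiseDisjoint p h hTdisj fun y hy =>
          (gBall_mono (by linarith [hrad y (hTS hy)])).trans (hsub y (hTS hy))

end Covering

section MaximalFunction

lemma exists_radius_of_lt_maxEnergy {p R : ℝ} {h : V → ℝ} {z : V} {c : ℝ≥0∞}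
    (hc : c < maxEnergy G p h R z) :
    ∃ r, 0 < r ∧ r < R ∧ c * (gBall G z r).ncard ≤ pEnergy G p (gBall G z r) h := by
  simp only [maxEnergy, lt_iSup_iff] at hc
  obtain ⟨r, hr, hrR, hlt⟩ := hc
  exact ⟨r, hr, hrR, ENNReal.mul_le_of_le_div hlt.le⟩

lemma mul_ncard_le_pEnergy_of_lt_maxEnergy (hc : G.Connected) {CD : ℝ} (hD : IsDoubling G CD)
    {p R R' : ℝ} {h : V → ℝ} {x : V} {S : Set V} (hS : S.Finite) (hSB : S ⊆ gBall G x R)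
    {c : ℝ≥0∞} (hM : ∀ z ∈ S, c < maxEnergy G p h R' z) :
    c * S.ncard ≤ ENNReal.ofReal (CD ^ 2) * pEnergy G p (gBall G x (R + 3 * R')) h := by
  choose! rad hrad hradR hE using fun z hz => exists_radius_of_lt_maxEnergy (hM z hz)
  rw [Set.ncard_eq_toFinset_card S hS]
  refine mul_card_le_pEnergy_of_gBall_cover hc hD hS.toFinset rad (by simpa using hrad)
    (fun z hz => ?_) (by simpa using hE)
  rw [Set.Finite.mem_toFinset] at hz
  exact (gBall_subset_gBall_add hc (hSB hz)).trans (gBall_mono (by linarith [hradR z hz]))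

end MaximalFunction

section TwoPoint

lemma ncard_le_two_mul_ncard_sep_of_forall_or {α : Type*} {B L Z : Set α} {P : α → Prop}
    (hB : B.Finite) (hL : L ⊆ B) (hZ : Z ⊆ B) (hBZ : B.ncard ≤ 2 * Z.ncard)
    (h : ∀ z ∈ L, ∀ y ∈ Z, P z ∨ P y) : L.ncard ≤ 2 * {z ∈ B | P z}.ncard := by
  have hfin : {z ∈ B | P z}.Finite := hB.subset (Set.sep_subset _ _)
  by_cases hLP : ∀ z ∈ L, P z
  · have hLP' : L ⊆ {z ∈ B | P z} := fun z hz => ⟨hL hz, hLP z hz⟩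
    have := Set.ncard_le_ncard hLP' hfin
    omega
  · push Not at hLP
    obtain ⟨z, hzL, hz⟩ := hLP
    have hZP : Z ⊆ {z ∈ B | P z} := fun y hy => ⟨hZ hy, (h z hzL y hy).resolve_left hz⟩
    have := Set.ncard_le_ncard hL hB
    have := Set.ncard_le_ncard hZP hfin
    omega

lemma TPineq.le_maxEnergy_or_le_maxEnergy {p β CTP : ℝ} (hTP : TPineq G p β CTP)
    (hCTP : 0 < CTP) {x y z : V} {R : ℝ} (hR : 1 ≤ R) (h : V → ℝ)
    (hz : z ∈ gBall G x (CTP⁻¹ * R)) (hy : y ∈ gBall G x (CTP⁻¹ * R)) :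
    ENNReal.ofReal (|h z - h y| ^ p / (2 * CTP * R ^ β)) ≤ maxEnergy G p h R z ∨
      ENNReal.ofReal (|h z - h y| ^ p / (2 * CTP * R ^ β)) ≤ maxEnergy G p h R y := by
  by_contra! hlt
  have hK : 0 < CTP * R ^ β := mul_pos hCTP (Real.rpow_pos_of_pos (by linarith) β)
  have ht : 0 ≤ |h z - h y| ^ p / (2 * CTP * R ^ β) := by positivity
  have hsplit : ENNReal.ofReal (|h z - h y| ^ p) = ENNReal.ofReal (CTP * R ^ β) *
      (ENNReal.ofReal (|h z - h y| ^ p / (2 * CTP * R ^ β)) +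
        ENNReal.ofReal (|h z - h y| ^ p / (2 * CTP * R ^ β))) := by
    rw [← ENNReal.ofReal_add ht ht, ← ENNReal.ofReal_mul hK.le]
    congr 1
    field_simp
    ring
  have hTPzy := hTP x R hR h z hz y hy
  rw [hsplit] at hTPzy
  exact hTPzy.not_gt <| ENNReal.mul_lt_mul_right (by simpa using hK) ENNReal.ofReal_ne_top
    (ENNReal.add_lt_add hlt.1 hlt.2)

lemma rpow_mul_ncard_le_pEnergy_of_TPineq (hc : G.Connected) {CD : ℝ} (hD : IsDoubling G CD)
    {p β CTP : ℝ} (hCTP : 0 < CTP) (hTP : TPineq G p β CTP) {x : V} {R : ℝ} (hR : 1 ≤ R)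
    {h : V → ℝ} {c : ℝ} (hc0 : 0 < c) {L Z : Set V} (hL : L ⊆ gBall G x R)
    (hZ : Z ⊆ gBall G x R) (hZcard : (gBall G x R).ncard ≤ 2 * Z.ncard)
    (hhL : ∀ z ∈ L, h z = c) (hhZ : ∀ z ∈ Z, h z = 0) :
    ENNReal.ofReal (c ^ p) * L.ncard ≤ ENNReal.ofReal (8 * CTP * CD ^ 2 * ((CTP + 1) * R) ^ β) *
      pEnergy G p (gBall G x ((3 * CTP + 4) * R)) h := by
  set R' := (CTP + 1) * R
  set t := c ^ p / (2 * CTP * R' ^ β)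
  have hR' : 1 ≤ R' := by nlinarith
  have ht : 0 < t := by positivity
  have hBR' : gBall G x R ⊆ gBall G x (CTP⁻¹ * R') := gBall_mono <| by
    rw [inv_mul_eq_div, le_div_iff₀ hCTP]
    nlinarith
  set S := {z ∈ gBall G x R | ENNReal.ofReal t ≤ maxEnergy G p h R' z}
  have hLS : L.ncard ≤ 2 * S.ncard :=
    ncard_le_two_mul_ncard_sep_of_forall_or (hD.finite_gBall x R) hL hZ hZcard fun z hz y hy => by
      simpa [t, hhL z hz, hhZ y hy, abs_of_pos hc0] using
        hTP.le_maxEnergy_or_le_maxEnergy hCTP hR' h (hBR' (hL hz)) (hBR' (hZ hy))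
  have hweak : ENNReal.ofReal (t / 2) * S.ncard ≤
      ENNReal.ofReal (CD ^ 2) * pEnergy G p (gBall G x (R + 3 * R')) h :=
    mul_ncard_le_pEnergy_of_lt_maxEnergy hc hD ((hD.finite_gBall x R).subset (Set.sep_subset _ _))
      (Set.sep_subset _ _) fun z hz =>
        ((ENNReal.ofReal_lt_ofReal_iff ht).2 (half_lt_self ht)).trans_le hz.2
  have hconst : 8 * CTP * R' ^ β * (t / 2) = 2 * c ^ p := by
    simp only [t]
    field_simp
    ring
  calc ENNReal.ofReal (c ^ p) * L.ncard ≤ ENNReal.ofReal (c ^ p) * (2 * S.ncard) := by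
        gcongr
        exact_mod_cast hLS
    _ = ENNReal.ofReal (8 * CTP * R' ^ β) * (ENNReal.ofReal (t / 2) * S.ncard) := by
        rw [← mul_assoc _ (ENNReal.ofReal _), ← ENNReal.ofReal_mul (by positivity), hconst,
          ENNReal.ofReal_mul zero_le_two, ENNReal.ofReal_ofNat]
        ring
    _ ≤ ENNReal.ofReal (8 * CTP * R' ^ β) *
          (ENNReal.ofReal (CD ^ 2) * pEnergy G p (gBall G x (R + 3 * R')) h) := by
        gcongr
    _ = ENNReal.ofReal (8 * CTP * CD ^ 2 * R' ^ β) *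
          pEnergy G p (gBall G x ((3 * CTP + 4) * R)) h := by
        rw [← mul_assoc, ← ENNReal.ofReal_mul (by positivity),
          show R + 3 * R' = (3 * CTP + 4) * R by ring]
        ring_nf

end TwoPoint

section LayerCake

lemma sum_ofReal_rpow_le_tsum_dyadic {p : ℝ} (hp : 0 < p) (F : Finset V) {g : V → ℝ}
    (hg : ∀ z, 0 ≤ g z) :
    ∑ z ∈ F, ENNReal.ofReal (g z ^ p) ≤ ENNReal.ofReal (4 ^ p) * ∑' k : ℤ,
      ENNReal.ofReal (((2 : ℝ) ^ k) ^ p) * (F.filter fun z => 2 ^ (k + 1) ≤ g z).card := by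
  have hpoint : ∀ z, ENNReal.ofReal (g z ^ p) ≤ ENNReal.ofReal (4 ^ p) *
      ∑' k : ℤ, if (2 : ℝ) ^ (k + 1) ≤ g z then ENNReal.ofReal (((2 : ℝ) ^ k) ^ p) else 0 := by
    intro z
    rcases (hg z).eq_or_lt with h0 | hpos
    · simp [← h0, Real.zero_rpow hp.ne']
    obtain ⟨n, hn, hn'⟩ := exists_mem_Ico_zpow hpos one_lt_two
    have h4 : (4 : ℝ) * 2 ^ (n - 1) = 2 ^ (n + 1) := by
      rw [show (4 : ℝ) = 2 ^ (2 : ℤ) by norm_num, ← zpow_add₀ two_ne_zero]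
      ring_nf
    calc ENNReal.ofReal (g z ^ p)
        ≤ ENNReal.ofReal (4 ^ p) * ENNReal.ofReal (((2 : ℝ) ^ (n - 1)) ^ p) := by
          rw [← ENNReal.ofReal_mul (by positivity), ← Real.mul_rpow (by norm_num) (by positivity)]
          exact ENNReal.ofReal_le_ofReal (Real.rpow_le_rpow (hg z) (by linarith) hp.le)
      _ ≤ _ := by
          gcongr
          refine le_of_eq_of_le ?_ (ENNReal.le_tsum (n - 1))
          simp [hn]
  calc ∑ z ∈ F, ENNReal.ofReal (g z ^ p)
      ≤ ∑ z ∈ F, ENNReal.ofReal (4 ^ p) *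
          ∑' k : ℤ, if (2 : ℝ) ^ (k + 1) ≤ g z then ENNReal.ofReal (((2 : ℝ) ^ k) ^ p) else 0 :=
        Finset.sum_le_sum fun z _ => hpoint z
    _ = _ := by
        rw [← Finset.mul_sum, ← Summable.tsum_finsetSum fun _ _ => ENNReal.summable]
        simp only [← Finset.sum_filter, Finset.sum_const, nsmul_eq_mul, mul_comm]

end LayerCake

section Median

lemma tsum_ofReal_rpow_le_pEnergy_of_TPineq (hc : G.Connected) {CD : ℝ} (hD : IsDoubling G CD)
    {p β CTP : ℝ} (hp : 1 ≤ p) (hCTP : 0 < CTP) (hTP : TPineq G p β CTP) {x : V} {R : ℝ}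
    (hR : 1 ≤ R) {g : V → ℝ} (hg : ∀ z, 0 ≤ g z)
    (hZ : (gBall G x R).ncard ≤ 2 * {z ∈ gBall G x R | g z ≤ 0}.ncard) :
    ∑' z : gBall G x R, ENNReal.ofReal (g z ^ p) ≤
      ENNReal.ofReal (4 ^ p * (8 * CTP * CD ^ 2 * (CTP + 1) ^ β) * R ^ β) *
        pEnergy G p (gBall G x ((3 * CTP + 4) * R)) g := by
  set A := gBall G x ((3 * CTP + 4) * R)
  set K := 8 * CTP * CD ^ 2 * ((CTP + 1) * R) ^ β
  have hB := hD.finite_gBall x R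
  have hlevel : ∀ k : ℤ, ENNReal.ofReal (((2 : ℝ) ^ k) ^ p) *
      (hB.toFinset.filter fun z => 2 ^ (k + 1) ≤ g z).card ≤
        ENNReal.ofReal K * pEnergy G p A (fun z => dyadicTrunc k (g z)) := by
    intro k
    have h2k : (0 : ℝ) < 2 ^ k := zpow_pos two_pos k
    rw [← ncard_sep_eq_card_filter]
    exact rpow_mul_ncard_le_pEnergy_of_TPineq hc hD hCTP hTP hR h2k (Set.sep_subset _ _)
      (Set.sep_subset _ _) hZ (fun z hz => dyadicTrunc_of_ge hz.2)
      (fun z hz => dyadicTrunc_of_le (hz.2.trans h2k.le))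
  calc ∑' z : gBall G x R, ENNReal.ofReal (g z ^ p)
      = ∑ z ∈ hB.toFinset, ENNReal.ofReal (g z ^ p) :=
        tsum_subtype_eq_sum_toFinset hB fun z => ENNReal.ofReal (g z ^ p)
    _ ≤ ENNReal.ofReal (4 ^ p) * ∑' k : ℤ, ENNReal.ofReal (((2 : ℝ) ^ k) ^ p) *
          (hB.toFinset.filter fun z => 2 ^ (k + 1) ≤ g z).card :=
        sum_ofReal_rpow_le_tsum_dyadic (by linarith) _ hg
    _ ≤ ENNReal.ofReal (4 ^ p) * ∑' k : ℤ,
          ENNReal.ofReal K * pEnergy G p A (fun z => dyadicTrunc k (g z)) := by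
        gcongr _ * ?_
        exact ENNReal.tsum_le_tsum hlevel
    _ ≤ ENNReal.ofReal (4 ^ p) * (ENNReal.ofReal K * pEnergy G p A g) := by
        rw [ENNReal.tsum_mul_left]
        gcongr
        exact tsum_pEnergy_dyadicTrunc_le hp A g
    _ = _ := by
        simp only [K]
        rw [← mul_assoc, ← ENNReal.ofReal_mul (by positivity),
          Real.mul_rpow (by positivity) (by positivity)]
        ring_nf

lemma tsum_ofReal_abs_sub_rpow_le_of_median (hc : G.Connected) {CD : ℝ} (hD : IsDoubling G CD)
    {p β CTP : ℝ} (hp : 1 ≤ p) (hCTP : 0 < CTP) (hTP : TPineq G p β CTP) {x : V} {R : ℝ}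
    (hR : 1 ≤ R) (f : V → ℝ) {a : ℝ}
    (ha₁ : (gBall G x R).ncard ≤ 2 * {z ∈ gBall G x R | a ≤ f z}.ncard)
    (ha₂ : (gBall G x R).ncard ≤ 2 * {z ∈ gBall G x R | f z ≤ a}.ncard) :
    ∑' z : gBall G x R, ENNReal.ofReal (|f z - a| ^ p) ≤
      ENNReal.ofReal (2 * (4 ^ p * (8 * CTP * CD ^ 2 * (CTP + 1) ^ β)) * R ^ β) *
        pEnergy G p (gBall G x ((3 * CTP + 4) * R)) f := by
  set K := 4 ^ p * (8 * CTP * CD ^ 2 * (CTP + 1) ^ β) * R ^ β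
  set A := gBall G x ((3 * CTP + 4) * R)
  have hp0 : 0 < p := by linarith
  have hsplit : ∀ z, ENNReal.ofReal (|f z - a| ^ p) =
      ENNReal.ofReal (max (f z - a) 0 ^ p) + ENNReal.ofReal (max (a - f z) 0 ^ p) := by
    intro z
    rcases le_total (f z) a with h | h
    · simp [max_eq_right (sub_nonpos.2 h), abs_of_nonpos (sub_nonpos.2 h), Real.zero_rpow hp0.ne',
        sub_nonneg.2 h]
    · simp [max_eq_right (sub_nonpos.2 h), abs_of_nonneg (sub_nonneg.2 h), Real.zero_rpow hp0.ne',
        sub_nonneg.2 h]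
  have hpos : ∑' z : gBall G x R, ENNReal.ofReal (max (f z - a) 0 ^ p) ≤
      ENNReal.ofReal K * pEnergy G p A f := by
    refine (tsum_ofReal_rpow_le_pEnergy_of_TPineq (g := fun z => max (f z - a) 0) hc hD hp hCTP hTP
      hR (fun z => le_max_right _ _) (by simpa using ha₂)).trans (mul_le_mul_right ?_ _)
    refine pEnergy_le_pEnergy_of_abs_sub_le hp0.le A fun u v => ?_
    simpa using abs_max_sub_max_le_abs (f u - a) (f v - a) 0
  have hneg : ∑' z : gBall G x R, ENNReal.ofReal (max (a - f z) 0 ^ p) ≤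
      ENNReal.ofReal K * pEnergy G p A f := by
    refine (tsum_ofReal_rpow_le_pEnergy_of_TPineq (g := fun z => max (a - f z) 0) hc hD hp hCTP hTP
      hR (fun z => le_max_right _ _) (by simpa using ha₁)).trans (mul_le_mul_right ?_ _)
    refine pEnergy_le_pEnergy_of_abs_sub_le hp0.le A fun u v => ?_
    simpa [abs_sub_comm] using abs_max_sub_max_le_abs (a - f u) (a - f v) 0
  calc ∑' z : gBall G x R, ENNReal.ofReal (|f z - a| ^ p)
      = ∑' z : gBall G x R, ENNReal.ofReal (max (f z - a) 0 ^ p) +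
          ∑' z : gBall G x R, ENNReal.ofReal (max (a - f z) 0 ^ p) := by
        simp only [hsplit, ENNReal.tsum_add]
    _ ≤ ENNReal.ofReal K * pEnergy G p A f + ENNReal.ofReal K * pEnergy G p A f :=
        add_le_add hpos hneg
    _ = _ := by
        rw [← two_mul, ← mul_assoc, ← ENNReal.ofReal_ofNat 2, ← ENNReal.ofReal_mul zero_le_two]
        simp only [K]
        ring_nf

end Median

section Mean

lemma rpow_add_le_two_rpow_mul {u v p : ℝ} (hu : 0 ≤ u) (hv : 0 ≤ v) (hp : 1 ≤ p) :
    (u + v) ^ p ≤ 2 ^ (p - 1) * (u ^ p + v ^ p) := by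
  lift u to ℝ≥0 using hu
  lift v to ℝ≥0 using hv
  exact_mod_cast NNReal.rpow_add_le_mul_rpow_add_rpow u v hp

lemma card_mul_abs_sub_mean_rpow_le {ι : Type*} {p : ℝ} (hp : 1 ≤ p) (F : Finset ι)
    (f : ι → ℝ) (a : ℝ) :
    F.card * |a - (∑ y ∈ F, f y) / F.card| ^ p ≤ ∑ z ∈ F, |f z - a| ^ p := by
  rcases F.eq_empty_or_nonempty with rfl | hF
  · simp
  have hn : (0 : ℝ) < F.card := by exact_mod_cast hF.card_pos
  have hw : ∑ _z ∈ F, (1 / (F.card : ℝ)) = 1 := by simp [hn.ne']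
  have hmean : |a - (∑ y ∈ F, f y) / F.card| ≤ ∑ z ∈ F, 1 / (F.card : ℝ) * |f z - a| := by
    have : a - (∑ y ∈ F, f y) / F.card = ∑ z ∈ F, 1 / (F.card : ℝ) * (a - f z) := by
      rw [← Finset.mul_sum, Finset.sum_sub_distrib, Finset.sum_const, nsmul_eq_mul]
      field_simp
    rw [this]
    refine (Finset.abs_sum_le_sum_abs _ _).trans (le_of_eq (Finset.sum_congr rfl fun z _ => ?_))
    rw [abs_mul, abs_of_pos (by positivity), abs_sub_comm]
  have hjensen := Real.rpow_arith_mean_le_arith_mean_rpow F (fun _ => 1 / (F.card : ℝ))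
    (fun z => |f z - a|) (fun _ _ => by positivity) hw (fun _ _ => abs_nonneg _) hp
  have := (Real.rpow_le_rpow (abs_nonneg _) hmean (by linarith : (0 : ℝ) ≤ p)).trans hjensen
  rw [← Finset.mul_sum] at this
  calc F.card * |a - (∑ y ∈ F, f y) / F.card| ^ p
      ≤ F.card * (1 / F.card * ∑ z ∈ F, |f z - a| ^ p) := by gcongr
    _ = ∑ z ∈ F, |f z - a| ^ p := by field_simp

lemma sum_abs_sub_mean_rpow_le {ι : Type*} {p : ℝ} (hp : 1 ≤ p) (F : Finset ι) (f : ι → ℝ)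
    (a : ℝ) :
    ∑ z ∈ F, |f z - (∑ y ∈ F, f y) / F.card| ^ p ≤ 2 ^ p * ∑ z ∈ F, |f z - a| ^ p := by
  set m := (∑ y ∈ F, f y) / F.card
  have hpoint : ∀ z, |f z - m| ^ p ≤ 2 ^ (p - 1) * (|f z - a| ^ p + |a - m| ^ p) := fun z =>
    (Real.rpow_le_rpow (abs_nonneg _) (abs_sub_le _ _ _) (by linarith)).trans
      (rpow_add_le_two_rpow_mul (abs_nonneg _) (abs_nonneg _) hp)
  calc ∑ z ∈ F, |f z - m| ^ p
      ≤ ∑ z ∈ F, 2 ^ (p - 1) * (|f z - a| ^ p + |a - m| ^ p) :=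
        Finset.sum_le_sum fun z _ => hpoint z
    _ = 2 ^ (p - 1) * (∑ z ∈ F, |f z - a| ^ p + F.card * |a - m| ^ p) := by
        rw [← Finset.mul_sum, Finset.sum_add_distrib, Finset.sum_const, nsmul_eq_mul]
    _ ≤ 2 ^ (p - 1) * (∑ z ∈ F, |f z - a| ^ p + ∑ z ∈ F, |f z - a| ^ p) := by
        gcongr
        exact card_mul_abs_sub_mean_rpow_le hp F f a
    _ = 2 ^ p * ∑ z ∈ F, |f z - a| ^ p := by
        rw [← two_mul, ← mul_assoc, ← Real.rpow_add_one two_ne_zero, sub_add_cancel]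

lemma exists_median {ι : Type*} (F : Finset ι) (f : ι → ℝ) :
    ∃ a : ℝ, F.card ≤ 2 * (F.filter fun z => a ≤ f z).card ∧
      F.card ≤ 2 * (F.filter fun z => f z ≤ a).card := by
  rcases F.eq_empty_or_nonempty with rfl | hF
  · exact ⟨0, by simp⟩
  -- the least value of `f` at or below which half of `F` lies
  set T := (F.image f).filter fun t => F.card ≤ 2 * (F.filter fun z => f z ≤ t).card
  obtain ⟨z₀, hz₀, hmax⟩ := F.exists_max_image f hF
  have hT : T.Nonempty := ⟨f z₀, Finset.mem_filter.2 ⟨Finset.mem_image_of_mem f hz₀, by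
    rw [Finset.filter_true_of_mem fun z hz => hmax z hz]
    omega⟩⟩
  obtain ⟨a, haT, hamin⟩ := T.exists_min_image id hT
  refine ⟨a, ?_, (Finset.mem_filter.1 haT).2⟩
  by_contra! hlt
  have hsplit := Finset.card_filter_add_card_filter_not (s := F) (fun z => a ≤ f z)
  obtain ⟨y, hy, hymax⟩ := (F.filter fun z => ¬ a ≤ f z).exists_max_image f
    (Finset.card_pos.1 (by omega))
  have hyT : f y ∈ T := by
    refine Finset.mem_filter.2 ⟨Finset.mem_image_of_mem f (Finset.mem_filter.1 hy).1, ?_⟩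
    have := Finset.card_le_card (s := F.filter fun z => ¬ a ≤ f z)
      (t := F.filter fun z => f z ≤ f y)
      fun z hz => Finset.mem_filter.2 ⟨(Finset.mem_filter.1 hz).1, hymax z hz⟩
    omega
  exact (Finset.mem_filter.1 hy).2 (hamin _ hyT)

end Mean

section Poincare

lemma tsum_ofReal_abs_sub_ballAvg_rpow_le {p : ℝ} (hp : 1 ≤ p) {x : V} {R : ℝ}
    (hB : (gBall G x R).Finite) (f : V → ℝ) (a : ℝ) :
    ∑' y : gBall G x R, ENNReal.ofReal (|f y - ballAvg G x R f| ^ p) ≤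
      ENNReal.ofReal (2 ^ p) * ∑' y : gBall G x R, ENNReal.ofReal (|f y - a| ^ p) := by
  have havg : ballAvg G x R f = (∑ y ∈ hB.toFinset, f y) / hB.toFinset.card := by
    rw [ballAvg, finsum_mem_eq_finite_toFinset_sum f hB, Set.ncard_eq_toFinset_card _ hB]
  rw [tsum_subtype_eq_sum_toFinset hB (fun y => ENNReal.ofReal (|f y - ballAvg G x R f| ^ p)),
    tsum_subtype_eq_sum_toFinset hB (fun y => ENNReal.ofReal (|f y - a| ^ p)), havg,
    ← ENNReal.ofReal_sum_of_nonneg (fun _ _ => by positivity),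
    ← ENNReal.ofReal_sum_of_nonneg (fun _ _ => by positivity), ← ENNReal.ofReal_mul (by positivity)]
  exact ENNReal.ofReal_le_ofReal (sum_abs_sub_mean_rpow_le hp _ f a)

lemma PIineq.of_median {CD : ℝ} (hD : IsDoubling G CD) {p β C A : ℝ} (hp : 1 ≤ p)
    (hmedian : ∀ (x : V) (R : ℝ), 1 ≤ R → ∀ (f : V → ℝ) (a : ℝ),
      (gBall G x R).ncard ≤ 2 * {z ∈ gBall G x R | a ≤ f z}.ncard →
      (gBall G x R).ncard ≤ 2 * {z ∈ gBall G x R | f z ≤ a}.ncard →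
      ∑' z : gBall G x R, ENNReal.ofReal (|f z - a| ^ p) ≤
        ENNReal.ofReal (C * R ^ β) * pEnergy G p (gBall G x (A * R)) f) :
    PIineq G p β (max 1 (2 ^ p * C)) A := by
  intro x R hR f
  have hB := hD.finite_gBall x R
  obtain ⟨a, ha₁, ha₂⟩ := exists_median hB.toFinset f
  rw [← ncard_sep_eq_card_filter, ← Set.ncard_eq_toFinset_card _ hB] at ha₁ ha₂
  calc ∑' y : gBall G x R, ENNReal.ofReal (|f y - ballAvg G x R f| ^ p)
      ≤ ENNReal.ofReal (2 ^ p) * ∑' y : gBall G x R, ENNReal.ofReal (|f y - a| ^ p) :=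
        tsum_ofReal_abs_sub_ballAvg_rpow_le hp hB f a
    _ ≤ ENNReal.ofReal (2 ^ p) *
          (ENNReal.ofReal (C * R ^ β) * pEnergy G p (gBall G x (A * R)) f) := by
        gcongr
        exact hmedian x R hR f a ha₁ ha₂
    _ ≤ ENNReal.ofReal (max 1 (2 ^ p * C) * R ^ β) * pEnergy G p (gBall G x (A * R)) f := by
        rw [← mul_assoc, ← ENNReal.ofReal_mul (by positivity), ← mul_assoc]
        gcongr
        exact le_max_right _ _

end Poincare

end Paper

theorem statement6_general (p β CD CTP : ℝ) (hp : 1 ≤ p) (hCD : 1 ≤ CD)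
    (hCTP : 0 < CTP) (D : ℕ) :
    ∃ C : ℝ, 0 < C ∧ ∃ A : ℝ, 0 < A ∧ ∃ CPI : ℝ, 1 ≤ CPI ∧ ∃ API : ℝ, 1 ≤ API ∧
      ∀ (V : Type) (G : SimpleGraph V),
        G.Connected → Paper.DegLE G D →
        (∀ (x : V) (r : ℝ), 0 < r → (Paper.gBall G x (2 * r)).Finite ∧
          ((Paper.gBall G x (2 * r)).ncard : ℝ) ≤ CD * ((Paper.gBall G x r).ncard : ℝ)) →
        Paper.TPineq G p β CTP →
        (∀ (x : V) (R : ℝ), 1 ≤ R → ∀ f : V → ℝ, ∀ a : ℝ,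
          (Paper.gBall G x R).ncard ≤ 2 * {z ∈ Paper.gBall G x R | a ≤ f z}.ncard →
          (Paper.gBall G x R).ncard ≤ 2 * {z ∈ Paper.gBall G x R | f z ≤ a}.ncard →
          (∑' z : Paper.gBall G x R, ENNReal.ofReal (|f z - a| ^ p)) ≤
            ENNReal.ofReal (C * R ^ β) * Paper.pEnergy G p (Paper.gBall G x (A * R)) f) ∧
        Paper.PIineq G p β CPI API := by
  set C := 2 * (4 ^ p * (8 * CTP * CD ^ 2 * (CTP + 1) ^ β))
  refine ⟨C, by positivity, 3 * CTP + 4, by positivity, max 1 (2 ^ p * C), le_max_left _ _,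
    3 * CTP + 4, by linarith, fun V G hc _ hD hTP => ?_⟩
  have hmedian := fun (x : V) (R : ℝ) (hR : 1 ≤ R) f a =>
    Paper.tsum_ofReal_abs_sub_rpow_le_of_median (x := x) (a := a) hc hD hp hCTP hTP hR f
  exact ⟨hmedian, Paper.PIineq.of_median hD hp hmedian⟩

/-- Lemma `lem.TP-PI`: two-point estimate implies Poincaré inequality.
Let `p ∈ [1,∞)`, `β > 0`. Assume `deg(G) < ∞`, the counting measure is volume doubling
with constant `CD`, and `G` satisfies `TP_p(β)` with constant `CTP`. Then there are
`C, A > 0` depending only on `p, CD`, the degree bound and `CTP` such that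
`Σ_{z∈B(x,R)} |f(z)-a|^p ≤ C·R^β·𝔈_{p,B(x,AR)}(f)` for every `x`, `R ≥ 1`, `f` and
every median `a` of `f` on `B(x,R)`. In particular `G` satisfies `PI_p(β)`. -/
theorem statement6 (p β CD CTP : ℝ) (hp : 1 ≤ p) (hβ : 0 < β) (hCD : 1 ≤ CD)
    (hCTP : 0 < CTP) (D : ℕ) :
    ∃ C : ℝ, 0 < C ∧ ∃ A : ℝ, 0 < A ∧ ∃ CPI : ℝ, 1 ≤ CPI ∧ ∃ API : ℝ, 1 ≤ API ∧
      ∀ (V : Type) (G : SimpleGraph V),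
        G.Connected → Paper.DegLE G D →
        (∀ (x : V) (r : ℝ), 0 < r → (Paper.gBall G x (2 * r)).Finite ∧
          ((Paper.gBall G x (2 * r)).ncard : ℝ) ≤ CD * ((Paper.gBall G x r).ncard : ℝ)) →
        Paper.TPineq G p β CTP →
        (∀ (x : V) (R : ℝ), 1 ≤ R → ∀ f : V → ℝ, ∀ a : ℝ,
          (Paper.gBall G x R).ncard ≤ 2 * {z ∈ Paper.gBall G x R | a ≤ f z}.ncard →
          (Paper.gBall G x R).ncard ≤ 2 * {z ∈ Paper.gBall G x R | f z ≤ a}.ncard →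
          (∑' z : Paper.gBall G x R, ENNReal.ofReal (|f z - a| ^ p)) ≤
            ENNReal.ofReal (C * R ^ β) * Paper.pEnergy G p (Paper.gBall G x (A * R)) f) ∧
        Paper.PIineq G p β CPI API :=
  statement6_general p β CD CTP hp hCD hCTP D
end

section
/- Let p > 0 and let G₁ = (V, E₁) and G₂ = (V, E₂) be connected simple undirected graphs on the same vertex set with E₂ ⊆ E₁ and L* := deg(G₁) < ∞. Suppose there exists D* ≥ 1 such that d₂(x,y) ≤ D* for every edge {x,y} ∈ E₁ ∖ E₂, where d₂ is the graph distance of G₂. Then for every f : V → ℝ: 𝔈_p^{G₂}(f) ≤ 𝔈_p^{G₁}(f) ≤ (1 + L*^{2D*}·max(D*^{p−1}, 1))·𝔈_p^{G₂}(f). -/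
/-! Every edge `{x, y}` of `G₁` missing from `G₂` is replaced by a `G₂`-geodesic of length
`n ≤ m := ⌊D*⌋`. The triangle inequality and the power-mean inequality give
`|f x - f y|^p ≤ max(D*^(p-1), 1) · ∑ |f u - f v|^p` over the edges `(u, v)` of that geodesic.
If `(u, v)` is its `i`-th step, then `x` is within `G₁`-distance `i` of `u` and `y` within
`m - 1 - i` of `v`, so by the degree bound each `G₂`-edge is charged at most `4 L*^(m-1)` times
for each of the `m` positions; as soon as `E₁ ≠ E₂` one has `L* ≥ 2`, hence
`m · 4 L*^(m-1) ≤ L*^(2m) ≤ L*^(2D*)`. -/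

open scoped ENNReal NNReal

open Finset

namespace Nat

lemma sum_range_succ_pow_le_two_mul_pow {L : ℕ} (hL : 2 ≤ L) (k : ℕ) :
    ∑ j ∈ range (k + 1), L ^ j ≤ 2 * L ^ k := by
  induction k with
  | zero => simp
  | succ k ih =>
    rw [sum_range_succ, pow_succ]
    nlinarith [Nat.mul_le_mul_left (L ^ k) hL]

lemma mul_four_mul_pow_pred_le_pow_two_mul {L : ℕ} (hL : 2 ≤ L) (m : ℕ) :
    m * (4 * L ^ (m - 1)) ≤ L ^ (2 * m) := by
  rcases Nat.eq_zero_or_pos m with rfl | hm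
  · simp
  have h4m : 4 * m ≤ L ^ (m + 1) :=
    calc 4 * m ≤ 4 * 2 ^ (m - 1) := by have := (m - 1).lt_two_pow_self; omega
      _ = 2 ^ (m + 1) := by rw [show m + 1 = m - 1 + 2 by omega, pow_add]; ring
      _ ≤ L ^ (m + 1) := Nat.pow_le_pow_left hL _
  calc m * (4 * L ^ (m - 1)) = 4 * m * L ^ (m - 1) := by ring
    _ ≤ L ^ (m + 1) * L ^ (m - 1) := Nat.mul_le_mul_right _ h4m
    _ = L ^ (2 * m) := by rw [← pow_add]; congr 1; omega

end Nat

namespace Real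

lemma rpow_sum_le_sum_rpow {ι : Type*} (s : Finset ι) {a : ι → ℝ} (ha : ∀ i ∈ s, 0 ≤ a i)
    {p : ℝ} (hp : 0 < p) (hp1 : p ≤ 1) :
    (∑ i ∈ s, a i) ^ p ≤ ∑ i ∈ s, a i ^ p := by
  classical
  induction s using Finset.induction_on with
  | empty => simp [zero_rpow hp.ne']
  | insert j s hj ih =>
    rw [sum_insert hj, sum_insert hj]
    have hs : ∀ i ∈ s, 0 ≤ a i := fun i hi => ha i (mem_insert_of_mem hi)
    calc (a j + ∑ i ∈ s, a i) ^ p ≤ a j ^ p + (∑ i ∈ s, a i) ^ p :=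
          rpow_add_le_add_rpow (ha j (mem_insert_self j s)) (sum_nonneg hs) hp.le hp1
      _ ≤ a j ^ p + ∑ i ∈ s, a i ^ p := by gcongr; exact ih hs

lemma rpow_sum_le_max_mul_sum_rpow {ι : Type*} (s : Finset ι) {a : ι → ℝ}
    (ha : ∀ i ∈ s, 0 ≤ a i) {p D : ℝ} (hp : 0 < p) (hsD : (#s : ℝ) ≤ D) :
    (∑ i ∈ s, a i) ^ p ≤ max (D ^ (p - 1)) 1 * ∑ i ∈ s, a i ^ p := by
  have hsum : 0 ≤ ∑ i ∈ s, a i ^ p := sum_nonneg fun i hi => rpow_nonneg (ha i hi) p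
  rcases le_total p 1 with hp1 | hp1
  · calc (∑ i ∈ s, a i) ^ p ≤ ∑ i ∈ s, a i ^ p := rpow_sum_le_sum_rpow s ha hp hp1
      _ ≤ max (D ^ (p - 1)) 1 * ∑ i ∈ s, a i ^ p := le_mul_of_one_le_left hsum (le_max_right _ _)
  · calc (∑ i ∈ s, a i) ^ p ≤ (#s : ℝ) ^ (p - 1) * ∑ i ∈ s, a i ^ p :=
          rpow_sum_le_const_mul_sum_rpow_of_nonneg s hp1 ha
      _ ≤ max (D ^ (p - 1)) 1 * ∑ i ∈ s, a i ^ p := by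
          gcongr
          exact (rpow_le_rpow (Nat.cast_nonneg _) hsD (by linarith)).trans (le_max_left _ _)

end Real

namespace SimpleGraph.Walk

variable {V : Type*} {G : SimpleGraph V} {x y : V}

lemma abs_sub_le_sum_abs_sub_getVert (W : G.Walk x y) (f : V → ℝ) :
    |f x - f y| ≤ ∑ i ∈ range W.length, |f (W.getVert i) - f (W.getVert (i + 1))| := by
  calc |f x - f y| = |∑ i ∈ range W.length, (f (W.getVert i) - f (W.getVert (i + 1)))| := by
        rw [sum_range_sub' (fun i => f (W.getVert i)), W.getVert_zero, W.getVert_length]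
    _ ≤ _ := abs_sum_le_sum_abs _ _

lemma ofReal_abs_sub_rpow_le {p D : ℝ} (hp : 0 < p) (W : G.Walk x y) (hW : (W.length : ℝ) ≤ D)
    (f : V → ℝ) :
    ENNReal.ofReal (|f x - f y| ^ p) ≤ ENNReal.ofReal (max (D ^ (p - 1)) 1) *
      ∑ i ∈ range W.length, ENNReal.ofReal (|f (W.getVert i) - f (W.getVert (i + 1))| ^ p) := by
  rw [← ENNReal.ofReal_sum_of_nonneg fun i _ => by positivity,
    ← ENNReal.ofReal_mul (by positivity)]
  refine ENNReal.ofReal_le_ofReal ?_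
  calc |f x - f y| ^ p
      ≤ (∑ i ∈ range W.length, |f (W.getVert i) - f (W.getVert (i + 1))|) ^ p :=
        Real.rpow_le_rpow (abs_nonneg _) (W.abs_sub_le_sum_abs_sub_getVert f) hp.le
    _ ≤ _ := Real.rpow_sum_le_max_mul_sum_rpow _ (fun i _ => abs_nonneg _) hp
        (by rwa [card_range])

end SimpleGraph.Walk

namespace ENNReal

lemma tsum_indicator_comp_le {α β : Type*} (s : Set α) (φ : α → β) (g : β → ℝ≥0∞) {N : ℕ∞}
    (hN : ∀ b, {a ∈ s | φ a = b}.encard ≤ N) :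
    ∑' a, s.indicator (g ∘ φ) a ≤ N * ∑' b, g b := by
  rw [← ENNReal.tsum_fiberwise _ φ, ← ENNReal.tsum_mul_left]
  refine ENNReal.tsum_le_tsum fun b => ?_
  calc ∑' a : φ ⁻¹' {b}, s.indicator (g ∘ φ) a = ∑' _ : {a ∈ s | φ a = b}, g b := by
        rw [_root_.tsum_subtype, _root_.tsum_subtype _ fun _ => g b]
        congr 1; ext a
        by_cases ha : a ∈ s <;> by_cases hb : φ a = b <;> simp [ha, hb]
    _ = {a ∈ s | φ a = b}.encard * g b := ENNReal.tsum_set_const _ _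
    _ ≤ N * g b := by gcongr; exact hN b

lemma one_add_ofReal_mul_pow_floor_le {M D : ℝ} (hM : 0 ≤ M) (hD : 0 ≤ D) {L : ℕ}
    (hL : 1 ≤ L) :
    1 + ENNReal.ofReal M * (L : ℝ≥0∞) ^ (2 * ⌊D⌋₊) ≤
      ENNReal.ofReal (1 + (L : ℝ) ^ (2 * D) * M) := by
  rw [ENNReal.ofReal_add zero_le_one (by positivity), ENNReal.ofReal_one, mul_comm,
    ENNReal.ofReal_mul (by positivity), ← ENNReal.ofReal_natCast,
    ← ENNReal.ofReal_pow (by positivity)]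
  gcongr
  rw [← Real.rpow_natCast]
  refine Real.rpow_le_rpow_of_exponent_le (by exact_mod_cast hL) ?_
  push_cast
  linarith [Nat.floor_le hD]

end ENNReal

namespace Paper

variable {V : Type*}

-- Balls are described by walks rather than by `dist`, which puts unreachable vertices at `0`.
lemma DegLE.encard_setOf_walk_length_le {G : SimpleGraph V} {L : ℕ} (hdeg : DegLE G L)
    (u : V) (k : ℕ) :
    {y | ∃ W : G.Walk u y, W.length ≤ k}.encard ≤ ∑ j ∈ range (k + 1), (L : ℕ∞) ^ j := by
  induction k generalizing u with
  | zero => simp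
  | succ k ih =>
    obtain ⟨hfin, hcard⟩ := hdeg u
    have hsub : {y | ∃ W : G.Walk u y, W.length ≤ k + 1} ⊆
        insert u (⋃ v ∈ hfin.toFinset, {y | ∃ W : G.Walk v y, W.length ≤ k}) := by
      rintro y ⟨W, hW⟩
      cases W with
      | nil => exact Set.mem_insert _ _
      | cons h W' =>
        refine Set.mem_insert_of_mem _ (Set.mem_iUnion₂.2 ⟨_, by simpa using h, W', ?_⟩)
        simp only [SimpleGraph.Walk.length_cons] at hW
        omega
    have hdegL : (hfin.toFinset.card : ℕ∞) ≤ L := by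
      rw [← Set.ncard_eq_toFinset_card _ hfin]; exact_mod_cast hcard
    calc _ ≤ (⋃ v ∈ hfin.toFinset, {y | ∃ W : G.Walk v y, W.length ≤ k}).encard + 1 :=
          (Set.encard_le_encard hsub).trans (Set.encard_insert_le _ _)
      _ ≤ ∑ _v ∈ hfin.toFinset, ∑ j ∈ range (k + 1), (L : ℕ∞) ^ j + 1 := by
          gcongr
          exact (Finset.set_encard_biUnion_le _ _).trans (sum_le_sum fun v _ => ih v)
      _ ≤ L * ∑ j ∈ range (k + 1), (L : ℕ∞) ^ j + 1 := by
          rw [sum_const, nsmul_eq_mul]; gcongr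
      _ = ∑ j ∈ range (k + 1 + 1), (L : ℕ∞) ^ j := by
          rw [sum_range_succ' _ (k + 1), mul_sum]
          simp [pow_succ']

lemma DegLE.encard_setOf_walk_length_le_two_mul_pow {G : SimpleGraph V} {L : ℕ}
    (hdeg : DegLE G L) (hL : 2 ≤ L) (u : V) (k : ℕ) :
    {y | ∃ W : G.Walk u y, W.length ≤ k}.encard ≤ 2 * L ^ k :=
  (hdeg.encard_setOf_walk_length_le u k).trans <| by
    exact_mod_cast Nat.sum_range_succ_pow_le_two_mul_pow hL k

lemma DegLE.encard_getVert_fiber_le {G₁ G₂ : SimpleGraph V} (hle : G₂ ≤ G₁) {L m : ℕ}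
    (hdeg : DegLE G₁ L) (hL : 2 ≤ L) {S : Set (V × V)} (W : ∀ z : V × V, G₂.Walk z.1 z.2)
    (hW : ∀ z ∈ S, (W z).length ≤ m) {i : ℕ} (hi : i < m) (b : V × V) :
    {z ∈ S | ((W z).getVert i, (W z).getVert (i + 1)) = b}.encard ≤ 4 * L ^ (m - 1) := by
  have hsub : {z ∈ S | ((W z).getVert i, (W z).getVert (i + 1)) = b} ⊆
      {y | ∃ P : G₁.Walk b.1 y, P.length ≤ i} ×ˢ
        {y | ∃ P : G₁.Walk b.2 y, P.length ≤ m - 1 - i} := by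
    rintro z ⟨hz, rfl⟩
    refine ⟨⟨(((W z).take i).reverse.mapLe hle), ?_⟩, ⟨((W z).drop (i + 1)).mapLe hle, ?_⟩⟩
    · simp [SimpleGraph.Walk.take_length]
    · have := hW z hz
      simp only [SimpleGraph.Walk.length_mapLe, SimpleGraph.Walk.drop_length]
      omega
  calc _ ≤ _ := Set.encard_le_encard hsub
    _ = _ * _ := Set.encard_prod
    _ ≤ (2 * L ^ i) * (2 * L ^ (m - 1 - i)) := by
        gcongr <;> exact hdeg.encard_setOf_walk_length_le_two_mul_pow hL _ _
    _ = 4 * L ^ (i + (m - 1 - i)) := by ring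
    _ = 4 * L ^ (m - 1) := by rw [Nat.add_sub_cancel' (by omega)]

lemma DegLE.two_le_of_adj_of_not_adj {G₁ G₂ : SimpleGraph V} (hle : G₂ ≤ G₁) {L : ℕ}
    (hdeg : DegLE G₁ L) {x y : V} (h₁ : G₁.Adj x y) (h₂ : ¬ G₂.Adj x y) (hr : G₂.Reachable x y) :
    2 ≤ L := by
  obtain ⟨W⟩ := hr
  cases W with
  | nil => exact (G₁.irrefl h₁).elim
  | @cons _ v _ hxv _ =>
    have hvy : v ≠ y := by rintro rfl; exact h₂ hxv
    have hsub : ({y, v} : Set V) ⊆ G₁.neighborSet x := by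
      rintro t (rfl | rfl)
      exacts [h₁, hle hxv]
    calc 2 = ({y, v} : Set V).ncard := (Set.ncard_pair hvy.symm).symm
      _ ≤ (G₁.neighborSet x).ncard := Set.ncard_le_ncard hsub (hdeg x).1
      _ ≤ L := (hdeg x).2

theorem tsum_indicator_adj_le_of_walk_bound {G₁ G₂ : SimpleGraph V} (hle : G₂ ≤ G₁)
    (h₂ : G₂.Connected) {L m : ℕ} (hdeg : DegLE G₁ L) (hL : 2 ≤ L)
    (hdist : ∀ x y : V, G₁.Adj x y → ¬ G₂.Adj x y → G₂.dist x y ≤ m)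
    (w : V × V → ℝ≥0∞) (M : ℝ≥0∞)
    (hw : ∀ x y (W : G₂.Walk x y), W.length ≤ m →
      w (x, y) ≤ M * ∑ i ∈ range W.length, w (W.getVert i, W.getVert (i + 1))) :
    ∑' z, {z : V × V | G₁.Adj z.1 z.2}.indicator w z ≤
      (1 + M * L ^ (2 * m)) * ∑' z, {z : V × V | G₂.Adj z.1 z.2}.indicator w z := by
  set A₁ := {z : V × V | G₁.Adj z.1 z.2}
  set A₂ := {z : V × V | G₂.Adj z.1 z.2}
  set S := A₁ \ A₂
  choose W hW using fun z : V × V => (h₂.preconnected z.1 z.2).exists_walk_length_eq_dist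
  have hWm : ∀ z ∈ S, (W z).length ≤ m := fun z hz => (hW z).trans_le (hdist _ _ hz.1 hz.2)
  set step : ℕ → V × V → V × V := fun i z => ((W z).getVert i, (W z).getVert (i + 1))
  have hpt : ∀ z, A₁.indicator w z ≤
      A₂.indicator w z + M * ∑ i ∈ range m, S.indicator (A₂.indicator w ∘ step i) z := by
    intro z
    by_cases hz₂ : z ∈ A₂
    · rw [Set.indicator_of_mem hz₂, Set.indicator_of_mem (show z ∈ A₁ from hle hz₂)]
      exact le_self_add
    by_cases hz₁ : z ∈ A₁
    · have hzS : z ∈ S := ⟨hz₁, hz₂⟩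
      simp only [Set.indicator_of_mem hz₁, Set.indicator_of_notMem hz₂,
        Set.indicator_of_mem hzS, zero_add, Function.comp_apply]
      calc w z ≤ M * ∑ i ∈ range (W z).length, w (step i z) := hw _ _ (W z) (hWm z hzS)
        _ = M * ∑ i ∈ range (W z).length, A₂.indicator w (step i z) := by
            congr 1
            refine sum_congr rfl fun i hi => (Set.indicator_of_mem ?_ _).symm
            exact (W z).adj_getVert_succ (mem_range.1 hi)
        _ ≤ M * ∑ i ∈ range m, A₂.indicator w (step i z) := by
            gcongr
            exact hWm z hzS
    · simp [Set.indicator_of_notMem hz₁]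
  have hfiber : ∀ i ∈ range m, ∑' z, S.indicator (A₂.indicator w ∘ step i) z ≤
      (4 * L ^ (m - 1) : ℕ∞) * ∑' z, A₂.indicator w z := fun i hi =>
    ENNReal.tsum_indicator_comp_le _ _ _ fun b =>
      hdeg.encard_getVert_fiber_le hle hL W hWm (mem_range.1 hi) b
  calc ∑' z, A₁.indicator w z
      ≤ ∑' z, (A₂.indicator w z + M * ∑ i ∈ range m, S.indicator (A₂.indicator w ∘ step i) z) :=
        ENNReal.tsum_le_tsum hpt
    _ = ∑' z, A₂.indicator w z +
          M * ∑ i ∈ range m, ∑' z, S.indicator (A₂.indicator w ∘ step i) z := by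
        rw [ENNReal.tsum_add, ENNReal.tsum_mul_left,
          Summable.tsum_finsetSum fun _ _ => ENNReal.summable]
    _ ≤ ∑' z, A₂.indicator w z +
          M * ∑ _i ∈ range m, (4 * L ^ (m - 1) : ℕ∞) * ∑' z, A₂.indicator w z := by
        gcongr with i hi
        exact hfiber i hi
    _ = (1 + M * ((m * (4 * L ^ (m - 1)) : ℕ) : ℝ≥0∞)) * ∑' z, A₂.indicator w z := by
        rw [sum_const, card_range, nsmul_eq_mul]
        push_cast
        ring
    _ ≤ (1 + M * L ^ (2 * m)) * ∑' z, A₂.indicator w z := by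
        gcongr
        exact_mod_cast Nat.mul_four_mul_pow_pred_le_pow_two_mul hL m

lemma pEnergy_univ_eq (G : SimpleGraph V) (p : ℝ) (f : V → ℝ) :
    pEnergy G p Set.univ f = (∑' z, {z : V × V | G.Adj z.1 z.2}.indicator
      (fun z => ENNReal.ofReal (|f z.1 - f z.2| ^ p)) z) / 2 := by
  rw [pEnergy, ← _root_.tsum_subtype]
  congr 1
  exact (Equiv.subtypeEquivRight fun e => by simp).tsum_eq
    fun z : {z : V × V | G.Adj z.1 z.2} => ENNReal.ofReal (|f z.1.1 - f z.1.2| ^ p)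

end Paper

theorem statement18_general {V : Type*} (p : ℝ) (hp : 0 < p)
    (G₁ G₂ : SimpleGraph V) (h₂ : G₂.Connected)
    (hE : ∀ x y : V, G₂.Adj x y → G₁.Adj x y)
    (Lstar : ℕ) (hdeg : Paper.DegLE G₁ Lstar)
    (Dstar : ℝ) (hD : 1 ≤ Dstar)
    (hdist : ∀ x y : V, G₁.Adj x y → ¬ G₂.Adj x y → (G₂.dist x y : ℝ) ≤ Dstar) :
    ∀ f : V → ℝ,
      Paper.pEnergy G₂ p Set.univ f ≤ Paper.pEnergy G₁ p Set.univ f ∧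
      Paper.pEnergy G₁ p Set.univ f ≤
        ENNReal.ofReal (1 + (Lstar : ℝ) ^ (2 * Dstar) * max (Dstar ^ (p - 1)) 1) *
          Paper.pEnergy G₂ p Set.univ f := by
  intro f
  have hle : G₂ ≤ G₁ := fun x y h => hE x y h
  rw [Paper.pEnergy_univ_eq, Paper.pEnergy_univ_eq, ← mul_div_assoc]
  refine ⟨ENNReal.div_le_div_right (ENNReal.tsum_le_tsum fun z =>
    Set.indicator_le_indicator_of_subset (fun z h => hle h) (fun _ => zero_le) z) 2,
    ENNReal.div_le_div_right ?_ 2⟩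
  by_cases hS : G₁ ≤ G₂
  · rw [le_antisymm hS hle]
    exact le_mul_of_one_le_left'
      (ENNReal.one_le_ofReal.2 (le_add_of_nonneg_right (by positivity)))
  obtain ⟨x, y, hxy₁, hxy₂⟩ : ∃ x y, G₁.Adj x y ∧ ¬ G₂.Adj x y := by
    simpa [SimpleGraph.le_iff_adj] using hS
  have hL := hdeg.two_le_of_adj_of_not_adj hle hxy₁ hxy₂ (h₂.preconnected x y)
  refine (Paper.tsum_indicator_adj_le_of_walk_bound hle h₂ hdeg hL
    (fun x y h₁ h₂ => Nat.le_floor (hdist x y h₁ h₂)) _ _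
    (fun x y W hW => W.ofReal_abs_sub_rpow_le hp ((Nat.cast_le.2 hW).trans
      (Nat.floor_le (by linarith))) f)).trans ?_
  gcongr
  exact ENNReal.one_add_ofReal_mul_pow_floor_le (by positivity) (by linarith) (by omega)

/-- stability of discrete energies, Proposition `prop.URI`.
Let `p > 0` and let `G₁ = (V,E₁)`, `G₂ = (V,E₂)` be connected simple graphs with
`E₂ ⊆ E₁` and `L* := deg(G₁) < ∞`. If `d₂(x,y) ≤ D*` for every `{x,y} ∈ E₁ \ E₂`, then
`𝔈_p^{G₂}(f) ≤ 𝔈_p^{G₁}(f) ≤ (1 + L*^{2D*}·max(D*^{p-1},1))·𝔈_p^{G₂}(f)` for all `f`. -/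
theorem statement18 {V : Type*} (p : ℝ) (hp : 0 < p)
    (G₁ G₂ : SimpleGraph V) (h₁ : G₁.Connected) (h₂ : G₂.Connected)
    (hE : ∀ x y : V, G₂.Adj x y → G₁.Adj x y)
    (Lstar : ℕ) (hdeg : Paper.DegLE G₁ Lstar)
    (Dstar : ℝ) (hD : 1 ≤ Dstar)
    (hdist : ∀ x y : V, G₁.Adj x y → ¬ G₂.Adj x y → (G₂.dist x y : ℝ) ≤ Dstar) :
    ∀ f : V → ℝ,
      Paper.pEnergy G₂ p Set.univ f ≤ Paper.pEnergy G₁ p Set.univ f ∧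
      Paper.pEnergy G₁ p Set.univ f ≤
        ENNReal.ofReal (1 + (Lstar : ℝ) ^ (2 * Dstar) * max (Dstar ^ (p - 1)) 1) *
          Paper.pEnergy G₂ p Set.univ f :=
  statement18_general p hp G₁ G₂ h₂ hE Lstar hdeg Dstar hD hdist
end

section
/- Let (X,𝖽) be a metric doubling metric space and let ν₁, ν₂ be finite Borel measures on X. Suppose there exist C₁ ∈ (0,∞) and A₁ ∈ (1,∞) such that ν₁(B_𝖽(x,r)) ≤ C₁·ν₂(B_𝖽(x,A₁·r)) for all x ∈ X and r > 0. Then there exists C₂ > 0, depending only on C₁, A₁ and the doubling constant of (X,𝖽), such that ν₁(B) ≤ C₂·ν₂(B) for every Borel set B ⊆ X. -/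
open scoped ENNReal NNReal

/-!
By outer regularity of the finite measure `ν₂` it suffices to treat an open set `U`, and by
continuity from below it suffices to bound `ν₁ S` for `S = {x | B(x, δ) ⊆ U}`. Vitali's covering
lemma covers `S` by balls `B(b, 6ρ)`, `ρ = δ / 6A₁`, with `ρ`-separated centres `b ∈ S`, so
`ν₁ S ≤ C₁ ∑_b ν₂ (B(b, δ))`. The balls `B(b, δ)` lie in `U`, and they overlap at most `N ^ k`
times (`2 ^ k > 12 A₁`): by the doubling condition a ball of radius `δ` contains at most `N ^ k`
points that are pairwise `ρ`-apart.
-/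

open Metric MeasureTheory Set

open Classical in
theorem MeasureTheory.sum_measure_le_mul_measure_biUnion {α ι : Type*} [MeasurableSpace α]
    (μ : Measure α) (s : Finset ι) {t : ι → Set α} (ht : ∀ i, MeasurableSet (t i)) {M : ℕ}
    (hM : ∀ x, (s.filter (x ∈ t ·)).card ≤ M) :
    ∑ i ∈ s, μ (t i) ≤ M * μ (⋃ i ∈ s, t i) := by
  have hpt : ∀ x, ∑ i ∈ s, (t i).indicator 1 x ≤
      (⋃ i ∈ s, t i).indicator (fun _ ↦ (M : ℝ≥0∞)) x := by
    intro x
    by_cases hx : x ∈ ⋃ i ∈ s, t i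
    · simp only [Set.indicator_apply, Pi.one_apply, Finset.sum_boole, hx, if_true]
      exact_mod_cast hM x
    · simp only [mem_iUnion, not_exists] at hx
      simp +contextual [hx]
  calc ∑ i ∈ s, μ (t i) = ∫⁻ x, ∑ i ∈ s, (t i).indicator 1 x ∂μ := by
        rw [lintegral_finsetSum _ fun i _ ↦ measurable_one.indicator (ht i)]
        simp_rw [lintegral_indicator_one (ht _)]
    _ ≤ ∫⁻ x, (⋃ i ∈ s, t i).indicator (fun _ ↦ (M : ℝ≥0∞)) x ∂μ := lintegral_mono hpt
    _ = M * μ (⋃ i ∈ s, t i) :=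
        lintegral_indicator_const (s.measurableSet_biUnion fun i _ ↦ ht i) _

theorem MeasureTheory.Measure.le_of_forall_isOpen_le {α : Type*} [TopologicalSpace α]
    [MeasurableSpace α] {μ ν : Measure α} [μ.OuterRegular] (h : ∀ U, IsOpen U → ν U ≤ μ U)
    (B : Set α) : ν B ≤ μ B := by
  rw [B.measure_eq_iInf_isOpen μ]
  exact le_iInf₂ fun U hBU ↦ le_iInf fun hU ↦ (measure_mono hBU).trans (h U hU)

def IsDoubling (X : Type*) [PseudoMetricSpace X] (N : ℕ) : Prop :=
  ∀ (x : X) (r : ℝ), 0 < r → ∃ s : Finset X, s.card ≤ N ∧ ball x r ⊆ ⋃ y ∈ s, ball y (r / 2)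

namespace IsDoubling

variable {X : Type*} [PseudoMetricSpace X] {N : ℕ}

theorem mono {M : ℕ} (hX : IsDoubling X N) (hNM : N ≤ M) : IsDoubling X M := fun x r hr ↦
  let ⟨s, hs, hcover⟩ := hX x r hr
  ⟨s, hs.trans hNM, hcover⟩

theorem exists_cover_pow (hX : IsDoubling X N) (k : ℕ) (x : X) (r : ℝ) :
    ∃ s : Finset X, s.card ≤ N ^ k ∧ ball x r ⊆ ⋃ y ∈ s, ball y (r / 2 ^ k) := by
  classical
  rcases le_or_gt r 0 with hr | hr
  · exact ⟨∅, by simp, by simp [ball_eq_empty.2 hr]⟩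
  induction k with
  | zero => exact ⟨{x}, by simp, by simp⟩
  | succ k ih =>
    obtain ⟨s, hs, hcover⟩ := ih
    choose t ht htcover using fun y : X ↦ hX y (r / 2 ^ k) (by positivity)
    refine ⟨s.biUnion t, ?_, ?_⟩
    · calc (s.biUnion t).card ≤ ∑ y ∈ s, (t y).card := Finset.card_biUnion_le
        _ ≤ s.card * N := Finset.sum_le_card_nsmul _ _ _ fun y _ ↦ ht y
        _ ≤ N ^ k * N := Nat.mul_le_mul_right N hs
    · intro z hz
      obtain ⟨y, hy, hzy⟩ := mem_iUnion₂.1 (hcover hz)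
      obtain ⟨w, hw, hzw⟩ := mem_iUnion₂.1 (htcover y hzy)
      rw [pow_succ, ← div_div]
      exact mem_iUnion₂.2 ⟨w, Finset.mem_biUnion.2 ⟨y, hy, hw⟩, hzw⟩

theorem totallyBounded_ball (hX : IsDoubling X N) (x : X) (r : ℝ) : TotallyBounded (ball x r) := by
  refine totallyBounded_iff.2 fun ε hε ↦ ?_
  obtain ⟨k, hk⟩ : ∃ k : ℕ, r / ε < 2 ^ k := pow_unbounded_of_one_lt _ one_lt_two
  obtain ⟨s, -, hcover⟩ := hX.exists_cover_pow k x r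
  refine ⟨s, s.finite_toSet, hcover.trans (iUnion₂_mono fun y _ ↦ ball_subset_ball ?_)⟩
  rw [div_le_iff₀ (by positivity)]
  rw [div_lt_iff₀ hε] at hk
  linarith

theorem separableSpace (hX : IsDoubling X N) : TopologicalSpace.SeparableSpace X := by
  rcases isEmpty_or_nonempty X with _ | ⟨⟨x⟩⟩
  · infer_instance
  rw [← TopologicalSpace.isSeparable_univ_iff, ← iUnion_ball_nat x]
  exact TopologicalSpace.isSeparable_iUnion.2 fun n ↦ (hX.totallyBounded_ball x n).isSeparable

/-- Points of a ball of radius `R` at mutual distance at least `a > 2 R / 2 ^ k` lie in distinct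
balls of radius `R / 2 ^ k` of a cover given by `exists_cover_pow`. -/
theorem card_le_pow_of_separated (hX : IsDoubling X N) {ι : Type*} {F : Finset ι} {c : ι → X}
    {z : X} {R a : ℝ} {k : ℕ} (hRa : 2 * R < 2 ^ k * a) (hc : ∀ i ∈ F, c i ∈ ball z R)
    (hsep : (F : Set ι).Pairwise fun i j ↦ a ≤ dist (c i) (c j)) : F.card ≤ N ^ k := by
  obtain ⟨s, hs, hcover⟩ := hX.exists_cover_pow k z R
  have : Nonempty X := ⟨z⟩
  choose! y hy hcy using fun i (hi : i ∈ F) ↦ mem_iUnion₂.1 (hcover (hc i hi))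
  refine (Finset.card_le_card_of_injOn y hy fun i hi j hj hij ↦ ?_).trans hs
  by_contra hne
  have hclose : dist (c i) (c j) < a := calc
    dist (c i) (c j) ≤ dist (c i) (y i) + dist (c j) (y j) := by
      rw [hij]; exact dist_triangle_right _ _ _
    _ < R / 2 ^ k + R / 2 ^ k := add_lt_add (hcy i hi) (hcy j hj)
    _ < a := by rw [← two_mul, mul_div_assoc', div_lt_iff₀ (by positivity)]; linarith
  exact (hsep hi hj hne).not_gt hclose

section ComparisonOfMeasures

variable [MeasurableSpace X] [OpensMeasurableSpace X] {k : ℕ} {C A : ℝ} {ν₁ ν₂ : Measure X}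

theorem tsum_measure_ball_le (hX : IsDoubling X N) (μ : Measure X) {u : Set X} {R a : ℝ}
    (hRa : 2 * R < 2 ^ k * a) (hsep : u.Pairwise fun b b' ↦ a ≤ dist b b') :
    ∑' b : u, μ (ball b R) ≤ N ^ k * μ (⋃ b ∈ u, ball b R) := by
  classical
  refine ENNReal.summable.tsum_le_of_sum_le fun F ↦ ?_
  have hcard : ∀ x, (F.filter (x ∈ ball ·.1 R)).card ≤ N ^ k := fun x ↦
    hX.card_le_pow_of_separated hRa (fun b hb ↦ mem_ball_comm.1 (Finset.mem_filter.1 hb).2)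
      fun b _ b' _ hne ↦ hsep b.2 b'.2 (Subtype.coe_ne_coe.2 hne)
  calc ∑ b ∈ F, μ (ball b R) ≤ ((N ^ k : ℕ) : ℝ≥0∞) * μ (⋃ b ∈ F, ball b.1 R) :=
        sum_measure_le_mul_measure_biUnion μ F (fun _ ↦ measurableSet_ball) hcard
    _ ≤ N ^ k * μ (⋃ b ∈ u, ball b R) := by
        push_cast
        gcongr
        exact iUnion₂_subset fun b _ ↦ subset_biUnion_of_mem (u := fun b : X ↦ ball b R) b.2

theorem measure_le_mul_measure_thickening (hX : IsDoubling X N) (hA : 0 < A)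
    (hk : 12 * A < 2 ^ k)
    (hν : ∀ (x : X) (r : ℝ), 0 < r → ν₁ (ball x r) ≤ ENNReal.ofReal C * ν₂ (ball x (A * r)))
    (S : Set X) {δ : ℝ} (hδ : 0 < δ) :
    ν₁ S ≤ ENNReal.ofReal C * N ^ k * ν₂ (thickening δ S) := by
  set ρ := δ / (6 * A)
  have hρ : 0 < ρ := by positivity
  have hAρ : A * (6 * ρ) = δ := by simp only [ρ]; field_simp
  obtain ⟨u, huS, hdisj, hcover⟩ :=
    Vitali.exists_disjoint_subfamily_covering_enlargement_closedBall S id (fun _ ↦ ρ) ρ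
      (fun _ _ ↦ le_rfl) 5 (by norm_num)
  have := hX.separableSpace
  have hu : u.Countable := (hdisj.mono fun _ ↦ ball_subset_closedBall).countable_of_isOpen
    (fun _ _ ↦ isOpen_ball) fun _ _ ↦ nonempty_ball.2 hρ
  have hSu : S ⊆ ⋃ b ∈ u, ball b (6 * ρ) := fun x hx ↦ by
    obtain ⟨b, hb, hsub⟩ := hcover x hx
    have hxb : dist x b ≤ 5 * ρ := hsub (mem_closedBall_self hρ.le)
    exact mem_biUnion hb (mem_ball.2 (by linarith))
  have hsep : u.Pairwise fun b b' ↦ ρ ≤ dist b b' := fun b hb b' hb' hne ↦ by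
    by_contra! hclose
    exact disjoint_left.1 (hdisj hb hb' hne) (mem_closedBall'.2 hclose.le)
      (mem_closedBall_self hρ.le)
  have hRa : 2 * δ < 2 ^ k * ρ := by rw [← hAρ]; nlinarith
  calc ν₁ S ≤ ν₁ (⋃ b ∈ u, ball b (6 * ρ)) := measure_mono hSu
    _ ≤ ∑' b : u, ν₁ (ball b (6 * ρ)) := measure_biUnion_le ν₁ hu _
    _ ≤ ∑' b : u, ENNReal.ofReal C * ν₂ (ball b δ) :=
        ENNReal.tsum_le_tsum fun b ↦ hAρ ▸ hν b _ (by positivity)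
    _ = ENNReal.ofReal C * ∑' b : u, ν₂ (ball b δ) := ENNReal.tsum_mul_left
    _ ≤ ENNReal.ofReal C * (N ^ k * ν₂ (⋃ b ∈ u, ball b δ)) := by
        gcongr; exact hX.tsum_measure_ball_le ν₂ hRa hsep
    _ ≤ ENNReal.ofReal C * N ^ k * ν₂ (thickening δ S) := by
        rw [mul_assoc, thickening_eq_biUnion_ball]
        gcongr _ * (_ * ν₂ ?_)
        exact biUnion_subset_biUnion_left huS

theorem measure_le_mul_measure_of_isOpen (hX : IsDoubling X N) (hA : 0 < A)
    (hk : 12 * A < 2 ^ k)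
    (hν : ∀ (x : X) (r : ℝ), 0 < r → ν₁ (ball x r) ≤ ENNReal.ofReal C * ν₂ (ball x (A * r)))
    {U : Set X} (hU : IsOpen U) :
    ν₁ U ≤ ENNReal.ofReal C * N ^ k * ν₂ U := by
  set S : ℕ → Set X := fun n ↦ {x | ball x (1 / (n + 1)) ⊆ U}
  have hS : Monotone S := fun n m hnm x hx ↦
    (ball_subset_ball (Nat.one_div_le_one_div hnm)).trans hx
  have hUS : U ⊆ ⋃ n, S n := fun x hx ↦ by
    obtain ⟨ε, hε, hxε⟩ := isOpen_iff.1 hU x hx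
    obtain ⟨n, hn⟩ := exists_nat_one_div_lt hε
    exact mem_iUnion.2 ⟨n, (ball_subset_ball hn.le).trans hxε⟩
  have hSU : ∀ n : ℕ, thickening (1 / (n + 1)) (S n) ⊆ U := fun n y hy ↦ by
    obtain ⟨x, hx, hyx⟩ := mem_thickening_iff.1 hy
    exact hx (mem_ball.2 hyx)
  calc ν₁ U ≤ ν₁ (⋃ n, S n) := measure_mono hUS
    _ = ⨆ n, ν₁ (S n) := hS.measure_iUnion
    _ ≤ ENNReal.ofReal C * N ^ k * ν₂ U := iSup_le fun n ↦
        (hX.measure_le_mul_measure_thickening hA hk hν (S n) Nat.one_div_pos_of_nat).trans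
          (by gcongr; exact hSU n)

theorem measure_le_mul_measure [BorelSpace X] [IsFiniteMeasure ν₂] (hX : IsDoubling X N)
    (hA : 0 < A) (hk : 12 * A < 2 ^ k)
    (hν : ∀ (x : X) (r : ℝ), 0 < r → ν₁ (ball x r) ≤ ENNReal.ofReal C * ν₂ (ball x (A * r)))
    (B : Set X) :
    ν₁ B ≤ ENNReal.ofReal C * N ^ k * ν₂ B := by
  set c : ℝ≥0∞ := ENNReal.ofReal C * N ^ k
  have := Measure.OuterRegular.smul ν₂ (x := c) (by finiteness)
  simpa using Measure.le_of_forall_isOpen_le (μ := c • ν₂)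
    (fun U hU ↦ by simpa using hX.measure_le_mul_measure_of_isOpen hA hk hν hU) B

end ComparisonOfMeasures

end IsDoubling

/-- comparison of measures from comparison on balls, Lemma `l:ac`.
Let `(X,𝖽)` be a metric doubling metric space (doubling constant `N`) and `ν₁, ν₂`
finite Borel measures with `ν₁(B(x,r)) ≤ C₁·ν₂(B(x,A₁r))` for all `x`, `r > 0`.
Then there is `C₂ > 0`, depending only on `C₁`, `A₁` and `N`, such that
`ν₁(B) ≤ C₂·ν₂(B)` for every Borel set `B`. -/
theorem statement19 (C₁ A₁ : ℝ) (hC₁ : 0 < C₁) (hA₁ : 1 < A₁) (N : ℕ) :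
    ∃ C₂ : ℝ, 0 < C₂ ∧
      ∀ (X : Type) [MetricSpace X] [MeasurableSpace X] [BorelSpace X],
        (∀ (x : X) (r : ℝ), 0 < r → ∃ s : Finset X, s.card ≤ N ∧
          Metric.ball x r ⊆ ⋃ y ∈ s, Metric.ball y (r / 2)) →
        ∀ ν₁ ν₂ : MeasureTheory.Measure X,
          MeasureTheory.IsFiniteMeasure ν₁ → MeasureTheory.IsFiniteMeasure ν₂ →
          (∀ (x : X) (r : ℝ), 0 < r →
            ν₁ (Metric.ball x r) ≤ ENNReal.ofReal C₁ * ν₂ (Metric.ball x (A₁ * r))) →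
          ∀ B : Set X, MeasurableSet B → ν₁ B ≤ ENNReal.ofReal C₂ * ν₂ B := by
  obtain ⟨k, hk⟩ : ∃ k : ℕ, 12 * A₁ < 2 ^ k := pow_unbounded_of_one_lt _ one_lt_two
  -- `N + 1` rather than `N`, so that `C₂ > 0` also when `N = 0`.
  refine ⟨C₁ * ((N + 1 : ℕ) : ℝ) ^ k, by positivity, fun X _ _ _ hX ν₁ ν₂ _ _ hν B _ ↦ ?_⟩
  have hX' : IsDoubling X (N + 1) := IsDoubling.mono hX N.le_succ
  rw [ENNReal.ofReal_mul hC₁.le, ENNReal.ofReal_pow (Nat.cast_nonneg _), ENNReal.ofReal_natCast]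
  exact hX'.measure_le_mul_measure (by linarith) hk hν B
end
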